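/- arXiv:1402.1059 — 8 statements merged into one kernel-verified Lean document; each statement's English description precedes it below -/
import Mathlib

section
/- Let h : (0,∞) → ℝ be an integrable function and suppose there exists x₀ > 0 such that h(x) ≤ 0 for all x ∈ (0, x₀) and h(x) ≥ 0 for all x ∈ (x₀, ∞). If ∫₀^∞ h(x) dx ≤ 0, then for every λ ≥ 0 we have ∫₀^∞ h(x) e^{-λx} dx ≤ 0. -/
open MeasureTheory Set

theorem stmt_0 (h : ℝ → ℝ) (hint : IntegrableOn h (Ioi 0))
    (x₀ : ℝ) (hx₀ : 0 < x₀)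
    (hneg : ∀ x : ℝ, 0 < x → x < x₀ → h x ≤ 0)
    (hpos : ∀ x : ℝ, x₀ < x → 0 ≤ h x)
    (hI : ∫ x in Ioi (0:ℝ), h x ≤ 0) :
    ∀ l : ℝ, 0 ≤ l → ∫ x in Ioi (0:ℝ), h x * Real.exp (-l * x) ≤ 0 := by
  intro l hl
  set c := Real.exp (-l * x₀) with hc
  have hcpos : 0 < c := Real.exp_pos _
  -- integrability of h x * exp(-l x) on Ioi 0
  have hmeas : AEStronglyMeasurable (fun x => h x * Real.exp (-l * x))
      (volume.restrict (Ioi (0:ℝ))) :=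
    hint.aestronglyMeasurable.mul
      ((Real.continuous_exp.comp (continuous_const.mul continuous_id)).aestronglyMeasurable)
  have hintf : IntegrableOn (fun x => h x * Real.exp (-l * x)) (Ioi 0) := by
    refine Integrable.mono hint hmeas ?_
    filter_upwards [ae_restrict_mem measurableSet_Ioi] with x hx
    have hx0 : (0:ℝ) < x := hx
    have he1 : Real.exp (-l * x) ≤ 1 := by
      rw [Real.exp_le_one_iff]
      nlinarith
    have he0 : 0 < Real.exp (-l * x) := Real.exp_pos _
    rw [Real.norm_eq_abs, Real.norm_eq_abs, abs_mul, abs_of_pos he0]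
    nlinarith [abs_nonneg (h x)]
  have hintg : IntegrableOn (fun x => h x * c) (Ioi 0) := hint.mul_const c
  have hmono : ∫ x in Ioi (0:ℝ), h x * Real.exp (-l * x) ≤ ∫ x in Ioi (0:ℝ), h x * c := by
    refine setIntegral_mono_on hintf hintg measurableSet_Ioi ?_
    intro x hx
    have hx0 : (0:ℝ) < x := hx
    rcases lt_trichotomy x x₀ with hlt | heq | hgt
    · have h1 : c ≤ Real.exp (-l * x) := by
        apply Real.exp_le_exp.2
        nlinarith
      have h2 : h x ≤ 0 := hneg x hx0 hlt
      nlinarith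
    · rw [heq]
    · have h1 : Real.exp (-l * x) ≤ c := by
        apply Real.exp_le_exp.2
        nlinarith
      have h2 : 0 ≤ h x := hpos x hgt
      nlinarith
  have : ∫ x in Ioi (0:ℝ), h x * c = (∫ x in Ioi (0:ℝ), h x) * c := MeasureTheory.integral_mul_const c _
  nlinarith [hmono]
end

section
/- For α ∈ (0,1) and t > 1 - α, there exists z ∈ ℂ with z ∉ (-∞, 0] such that z^{2t} + 2cos(πα) z^t + 1 = 0, where z^t = exp(t · Log z) with Log the principal branch of the logarithm. Consequently the function z ↦ 1/(z^{2t} + 2cos(πα) z^t + 1) fails to extend analytically to ℂ \ (-∞,0]. -/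
/-!
With `θ = (1 - α)π / t ∈ (0, π)`, the principal branch gives `z₀ = exp (iθ)` the power
`z₀ ^ t = exp (i(π - πα)) = -exp (-iπα)`, a root of `w² + 2 cos(πα) w + 1`; hence `z₀` is a zero of the
denominator `G`. On the positive axis the denominator is `y² + 2 cos(πα) y + 1 > 0` with `y = x ^ t > 0`.
An analytic `F` on the slit plane agreeing with the reciprocal there would satisfy `F · G = 1` on the
whole (connected) slit plane by the identity theorem, which fails at `z₀`.
-/

open Real Complex Filter Topology Set

namespace Complex

lemma exp_ofReal_mul_I_mem_slitPlane {θ : ℝ} (hθ : θ ∈ Ioo (-π) π) : exp (θ * I) ∈ slitPlane := by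
  rw [exp_mem_slitPlane, mul_I_im, ofReal_re, toIocMod_eq_self _ |>.2 ⟨hθ.1, by linarith [hθ.2]⟩]
  exact hθ.2.ne

lemma exp_ofReal_mul_I_cpow {θ : ℝ} (hθ : θ ∈ Ioc (-π) π) (c : ℂ) :
    exp (θ * I) ^ c = exp (θ * c * I) := by
  rw [cpow_def_of_ne_zero (exp_ne_zero _), log_exp (by simpa using hθ.1) (by simpa using hθ.2)]
  ring_nf

lemma cpow_two_mul (z c : ℂ) : z ^ (2 * c) = (z ^ c) ^ 2 := by
  exact_mod_cast cpow_nat_mul z 2 c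

lemma exp_pi_sub_mul_I_sq_add_two_cos_mul_add_one (φ : ℂ) :
    exp ((π - φ) * I) ^ 2 + 2 * cos φ * exp ((π - φ) * I) + 1 = 0 := by
  have h : exp ((π - φ) * I) = -exp (-φ * I) := by
    rw [sub_mul, sub_eq_add_neg, exp_add, exp_pi_mul_I, ← neg_mul]; ring
  have hinv : exp (φ * I) * exp (-φ * I) = 1 := by rw [← exp_add]; simp
  rw [h, two_cos]
  linear_combination -hinv

lemma exp_ofReal_mul_I_cpow_quadratic {θ t φ : ℝ} (hθ : θ ∈ Ioc (-π) π) (hθt : θ * t = π - φ) :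
    exp (θ * I) ^ (2 * t : ℂ) + 2 * (Real.cos φ : ℂ) * exp (θ * I) ^ (t : ℂ) + 1 = 0 := by
  rw [cpow_two_mul, exp_ofReal_mul_I_cpow hθ, ← ofReal_mul, hθt, ofReal_cos, ofReal_sub]
  exact exp_pi_sub_mul_I_sq_add_two_cos_mul_add_one φ

lemma ofReal_cpow_quadratic_ne_zero {c t x : ℝ} (hc : -1 < c) (hx : 0 < x) :
    (x : ℂ) ^ (2 * t : ℂ) + 2 * (c : ℂ) * (x : ℂ) ^ (t : ℂ) + 1 ≠ 0 := by
  have hy : 0 < x ^ t := rpow_pos_of_pos hx t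
  have hpos : 0 < (x ^ t) ^ 2 + 2 * c * x ^ t + 1 := by nlinarith [sq_nonneg (x ^ t - 1)]
  rw [cpow_two_mul, ← ofReal_cpow hx.le]
  exact_mod_cast hpos.ne'

lemma analyticOnNhd_cpow_const (c : ℂ) : AnalyticOnNhd ℂ (· ^ c) slitPlane :=
  analyticOnNhd_id.cpow analyticOnNhd_const fun _ hz ↦ hz

lemma isPreconnected_slitPlane : IsPreconnected slitPlane :=
  (starConvex_one_slitPlane.isPathConnected one_mem_slitPlane).isConnected.isPreconnected

lemma frequently_nhdsNE_one_of_forall_pos {p : ℂ → Prop} (hp : ∀ x : ℝ, 0 < x → p x) :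
    ∃ᶠ z in 𝓝[≠] (1 : ℂ), p z := by
  have hmaps : MapsTo ((↑) : ℝ → ℂ) {1}ᶜ {1}ᶜ := fun x hx ↦ by simpa using hx
  have hpos : ∀ᶠ x : ℝ in 𝓝[≠] 1, 0 < x := nhdsWithin_le_nhds (lt_mem_nhds one_pos)
  exact (continuous_ofReal.continuousWithinAt.tendsto_nhdsWithin hmaps).frequently
    (hpos.mono hp).frequently

lemma eqOn_slitPlane_of_forall_pos {f g : ℂ → ℂ} (hf : AnalyticOnNhd ℂ f slitPlane)
    (hg : AnalyticOnNhd ℂ g slitPlane) (hfg : ∀ x : ℝ, 0 < x → f x = g x) :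
    EqOn f g slitPlane :=
  hf.eqOn_of_preconnected_of_frequently_eq hg isPreconnected_slitPlane one_mem_slitPlane
    (frequently_nhdsNE_one_of_forall_pos hfg)

lemma not_exists_analyticOn_slitPlane_inv {G : ℂ → ℂ} (hG : AnalyticOnNhd ℂ G slitPlane)
    (hpos : ∀ x : ℝ, 0 < x → G x ≠ 0) {z₀ : ℂ} (hz₀ : z₀ ∈ slitPlane) (hGz₀ : G z₀ = 0) :
    ¬ ∃ F : ℂ → ℂ, AnalyticOn ℂ F slitPlane ∧ ∀ x : ℝ, 0 < x → F x = (G x)⁻¹ := by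
  rintro ⟨F, hF, hFG⟩
  have hF' := isOpen_slitPlane.analyticOn_iff_analyticOnNhd.1 hF
  have key := eqOn_slitPlane_of_forall_pos (g := fun _ ↦ 1) (hF'.mul hG) analyticOnNhd_const
    (fun x hx ↦ by simp [hFG x hx, inv_mul_cancel₀ (hpos x hx)]) hz₀
  simp [hGz₀] at key

end Complex

theorem stmt_2 (α t : ℝ) (hα : α ∈ Set.Ioo (0:ℝ) 1) (ht : 1 - α < t) :
    (∃ z ∈ Complex.slitPlane,
        z ^ (2 * t : ℂ) + 2 * (Real.cos (π * α) : ℂ) * z ^ (t : ℂ) + 1 = 0) ∧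
    ¬ ∃ F : ℂ → ℂ, AnalyticOn ℂ F Complex.slitPlane ∧
        ∀ x : ℝ, 0 < x →
          F x = ((x : ℂ) ^ (2 * t : ℂ)
              + 2 * (Real.cos (π * α) : ℂ) * (x : ℂ) ^ (t : ℂ) + 1)⁻¹ := by
  obtain ⟨hα0, hα1⟩ := hα
  have ht0 : 0 < t := by linarith
  set θ := (1 - α) * π / t
  have hθpos : 0 < θ := by positivity
  have hθ : θ ∈ Ioo (-π) π := ⟨by linarith [pi_pos], by rw [div_lt_iff₀ ht0]; nlinarith [pi_pos]⟩
  have hθt : θ * t = π - π * α := by simp only [θ]; rw [div_mul_cancel₀ _ ht0.ne']; ring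
  have hcos : -1 < Real.cos (π * α) := by
    rw [← Real.cos_pi]
    exact cos_lt_cos_of_nonneg_of_le_pi (by positivity) le_rfl (by nlinarith [pi_pos])
  have hzero := exp_ofReal_mul_I_cpow_quadratic (Ioo_subset_Ioc_self hθ) hθt
  have hG : AnalyticOnNhd ℂ
      (fun z : ℂ ↦ z ^ (2 * t : ℂ) + 2 * (Real.cos (π * α) : ℂ) * z ^ (t : ℂ) + 1) slitPlane :=
    ((analyticOnNhd_cpow_const _).add (analyticOnNhd_const.mul (analyticOnNhd_cpow_const _))).add
      analyticOnNhd_const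
  exact ⟨⟨_, exp_ofReal_mul_I_mem_slitPlane hθ, hzero⟩, not_exists_analyticOn_slitPlane_inv hG
    (fun _ hx ↦ ofReal_cpow_quadratic_ne_zero hcos hx) (exp_ofReal_mul_I_mem_slitPlane hθ) hzero⟩
end

section
/- For α ∈ (0,1), t ∈ (0, 1-α], the function f_{α,t}(x) = 1/(x^{2t} + 2cos(πα)x^t + 1) on (0,∞) extends to an analytic function on ℂ \ (-∞,0] that does not vanish there, where x^t is defined via the principal branch of the logarithm. -/
open Real

lemma aux_ne (α t : ℝ) (hα0 : 0 < α) (ht0 : 0 < t) (ht1 : t ≤ 1 - α)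
    (z : ℂ) (hz : z ∈ Complex.slitPlane) (θ : ℝ)
    (hθ : ∀ n : ℤ, 1 - α ≤ |θ + 2 * n|) :
    z ^ (t : ℂ) ≠ Complex.exp (π * θ * Complex.I) := by
  intro h
  have hz0 : z ≠ 0 := Complex.slitPlane_ne_zero hz
  rw [Complex.cpow_def_of_ne_zero hz0, Complex.exp_eq_exp_iff_exists_int] at h
  obtain ⟨n, hn⟩ := h
  have him := congrArg Complex.im hn
  simp [Complex.log_im, Complex.add_im, Complex.mul_im] at him
  have harg : |z.arg| < π := by
    rw [abs_lt]
    exact ⟨Complex.neg_pi_lt_arg z, lt_of_le_of_ne (Complex.arg_le_pi z)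
      (Complex.slitPlane_arg_ne_pi hz)⟩
  have h1 : |z.arg * t| < (1 - α) * π := by
    calc |z.arg * t| = |z.arg| * t := by rw [abs_mul, abs_of_pos ht0]
    _ < π * t := mul_lt_mul_of_pos_right harg ht0
    _ ≤ (1 - α) * π := by nlinarith [pi_pos]
  have h2 : (1 - α) * π ≤ |z.arg * t| := by
    have hn' : z.arg * t = π * (θ + 2 * n) := by rw [him]; ring
    rw [hn', abs_mul, abs_of_pos pi_pos]
    calc (1 - α) * π = π * (1 - α) := by ring
    _ ≤ π * |θ + 2 * n| := by
        have := hθ n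
        nlinarith [pi_pos]
  linarith

lemma aux_fact (α : ℝ) (w : ℂ) :
    w ^ 2 + 2 * (Real.cos (π * α) : ℂ) * w + 1 =
      (w - Complex.exp (π * ((1 + α : ℝ) : ℂ) * Complex.I)) *
        (w - Complex.exp (π * ((1 - α : ℝ) : ℂ) * Complex.I)) := by
  have e1 : Complex.exp (π * ((1 + α : ℝ) : ℂ) * Complex.I)
      = - Complex.exp (π * α * Complex.I) := by
    rw [show ((π:ℂ) * ((1 + α : ℝ) : ℂ) * Complex.I) = π * Complex.I + π * α * Complex.I by
      push_cast; ring, Complex.exp_add, Complex.exp_pi_mul_I]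
    ring
  have e2 : Complex.exp (π * ((1 - α : ℝ) : ℂ) * Complex.I)
      = - Complex.exp (-(π * α) * Complex.I) := by
    rw [show ((π:ℂ) * ((1 - α : ℝ) : ℂ) * Complex.I) = π * Complex.I + (-(π * α)) * Complex.I by
      push_cast; ring, Complex.exp_add, Complex.exp_pi_mul_I]
    ring
  have e3 : Complex.exp ((π:ℂ) * α * Complex.I) * Complex.exp (-((π:ℂ) * α * Complex.I)) = 1 := by
    rw [← Complex.exp_add]; simp
  have hc : (Real.cos (π * α) : ℂ) = Complex.cos (π * α) := by
    push_cast [Complex.ofReal_cos]; norm_num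
  rw [e1, e2, hc, Complex.cos]
  ring_nf
  linear_combination -e3

lemma aux_nonzero (α t : ℝ) (hα : α ∈ Set.Ioo (0:ℝ) 1) (ht : t ∈ Set.Ioc 0 (1 - α))
    (z : ℂ) (hz : z ∈ Complex.slitPlane) :
    z ^ (2 * t : ℂ) + 2 * (Real.cos (π * α) : ℂ) * z ^ (t : ℂ) + 1 ≠ 0 := by
  obtain ⟨hα0, hα1⟩ := hα
  obtain ⟨ht0, ht1⟩ := ht
  have hz0 : z ≠ 0 := Complex.slitPlane_ne_zero hz
  have hsq : z ^ (2 * (t:ℂ)) = (z ^ (t:ℂ)) ^ 2 := by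
    rw [show (2 * (t:ℂ)) = t + t by ring, Complex.cpow_add _ _ hz0]; ring
  rw [show (2 * t : ℂ) = 2 * (t:ℂ) by norm_num, hsq, aux_fact]
  apply mul_ne_zero
  · exact sub_ne_zero.mpr (aux_ne α t hα0 ht0 ht1 z hz (1 + α) (by
      intro n
      rcases le_or_gt 0 n with h | h
      · have h' : (0:ℝ) ≤ n := by exact_mod_cast h
        rw [abs_of_nonneg (by linarith)]; linarith
      · have h' : (n:ℝ) ≤ -1 := by exact_mod_cast (by omega : n ≤ -1)
        rw [abs_of_nonpos (by linarith)]; linarith))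
  · exact sub_ne_zero.mpr (aux_ne α t hα0 ht0 ht1 z hz (1 - α) (by
      intro n
      rcases le_or_gt 0 n with h | h
      · have h' : (0:ℝ) ≤ n := by exact_mod_cast h
        rw [abs_of_nonneg (by linarith)]; linarith
      · have h' : (n:ℝ) ≤ -1 := by exact_mod_cast (by omega : n ≤ -1)
        rw [abs_of_nonpos (by linarith)]; linarith))

theorem stmt_3 (α t : ℝ) (hα : α ∈ Set.Ioo (0:ℝ) 1) (ht : t ∈ Set.Ioc 0 (1 - α)) :
    (∀ z ∈ Complex.slitPlane,
        z ^ (2 * t : ℂ) + 2 * (Real.cos (π * α) : ℂ) * z ^ (t : ℂ) + 1 ≠ 0) ∧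
    AnalyticOn ℂ
      (fun z : ℂ => (z ^ (2 * t : ℂ) + 2 * (Real.cos (π * α) : ℂ) * z ^ (t : ℂ) + 1)⁻¹)
      Complex.slitPlane ∧
    ∀ x : ℝ, 0 < x →
      ((x : ℂ) ^ (2 * t : ℂ) + 2 * (Real.cos (π * α) : ℂ) * (x : ℂ) ^ (t : ℂ) + 1)⁻¹
        = ((x ^ (2 * t) + 2 * Real.cos (π * α) * x ^ t + 1)⁻¹ : ℝ) := by
  refine ⟨fun z hz => aux_nonzero α t hα ht z hz, ?_, ?_⟩
  · have hdiff : DifferentiableOn ℂ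
        (fun z : ℂ => (z ^ (2 * t : ℂ) + 2 * (Real.cos (π * α) : ℂ) * z ^ (t : ℂ) + 1)⁻¹)
        Complex.slitPlane := by
      intro z hz
      have h1 : DifferentiableAt ℂ
          (fun z : ℂ => z ^ (2 * t : ℂ) + 2 * (Real.cos (π * α) : ℂ) * z ^ (t : ℂ) + 1) z := by
        apply DifferentiableAt.add _ (differentiableAt_const 1)
        apply DifferentiableAt.add
        · exact differentiableAt_id.cpow (differentiableAt_const _) hz
        · exact (differentiableAt_const _).mul
            (differentiableAt_id.cpow (differentiableAt_const _) hz)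
      exact (h1.inv (aux_nonzero α t hα ht z hz)).differentiableWithinAt
    exact (hdiff.analyticOnNhd Complex.isOpen_slitPlane).analyticOn
  · intro x hx
    rw [show ((x:ℂ) ^ (2 * t : ℂ)) = ((x ^ (2 * t) : ℝ) : ℂ) by
        rw [Complex.ofReal_cpow hx.le]; push_cast; ring_nf,
      show ((x:ℂ) ^ (t : ℂ)) = ((x ^ t : ℝ) : ℂ) by rw [Complex.ofReal_cpow hx.le]]
    push_cast
    ring_nf
end

section
/- A function f : (0,∞) → (0,∞) of the form f(x) = c·x^a·∏_{i=1}^n (1 + c_i x)^{-b_i}, with c > 0, a ∈ ℝ, c_i > 0, b_i > 0, is hyperbolically completely monotone: for every u > 0 the function v ↦ f(uv)f(u/v) on (0,∞), viewed as a function of w = v + 1/v ∈ [2,∞), is completely monotone, i.e., there is a completely monotone function g on (2-ε,∞) with f(uv)f(u/v) = g(v + 1/v) for all v > 0. -/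
open Real Set Filter Topology

/-- `g` is completely monotone on `(a, ∞)`. -/
def CMOn (g : ℝ → ℝ) (a : ℝ) : Prop :=
  ContDiffOn ℝ (⊤ : ℕ∞) g (Set.Ioi a) ∧
    ∀ n : ℕ, ∀ x, a < x → 0 ≤ (-1 : ℝ) ^ n * iteratedDeriv n g x

/-- `f` is hyperbolically completely monotone on `(0, ∞)`. -/
def HCM (f : ℝ → ℝ) : Prop :=
  (∀ x : ℝ, 0 < x → 0 < f x) ∧
    ∀ u : ℝ, 0 < u → ∃ g : ℝ → ℝ, CMOn g 2 ∧
      ∀ v : ℝ, 0 < v → f (u * v) * f (u / v) = g (v + v⁻¹)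

lemma itD_of_isOpen {s : Set ℝ} (hs : IsOpen s) {x : ℝ} (hx : x ∈ s) (n : ℕ) (f : ℝ → ℝ) :
    iteratedDerivWithin n f s x = iteratedDeriv n f x := by
  rw [iteratedDerivWithin_eq_iteratedFDerivWithin, iteratedDeriv_eq_iteratedFDeriv,
    iteratedFDerivWithin_of_isOpen n hs hx]

lemma iteratedDeriv_add_at (m : ℕ) {f g : ℝ → ℝ} {s : Set ℝ} (hs : IsOpen s) {x : ℝ} (hx : x ∈ s)
    (hf : ContDiffOn ℝ (⊤ : ℕ∞) f s) (hg : ContDiffOn ℝ (⊤ : ℕ∞) g s) :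
    iteratedDeriv m (fun y => f y + g y) x = iteratedDeriv m f x + iteratedDeriv m g x := by
  rw [← itD_of_isOpen hs hx m f, ← itD_of_isOpen hs hx m g,
    ← iteratedDerivWithin_add hx hs.uniqueDiffOn ((hf.of_le (by exact_mod_cast le_top)) x hx) ((hg.of_le (by exact_mod_cast le_top)) x hx),
]
  exact (itD_of_isOpen hs hx m (f + g)).symm

lemma iteratedDeriv_zero_fun (m : ℕ) (x : ℝ) :
    iteratedDeriv m (fun _ : ℝ => (0:ℝ)) x = 0 := by
  induction m generalizing x with
  | zero => simp
  | succ k ih =>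
    rw [iteratedDeriv_succ']
    have h : deriv (fun _ : ℝ => (0:ℝ)) = fun _ : ℝ => (0:ℝ) := by
      funext y; simp
    rw [h]; exact ih x

lemma cmOn_const {a k : ℝ} (hk : 0 ≤ k) : CMOn (fun _ => k) a := by
  refine ⟨contDiffOn_const, fun m x hx => ?_⟩
  cases m with
  | zero => simpa using hk
  | succ s =>
    rw [iteratedDeriv_succ']
    have h : deriv (fun _ : ℝ => k) = fun _ : ℝ => (0:ℝ) := by funext y; simp
    rw [h, iteratedDeriv_zero_fun]
    simp

lemma cmOn_neg_deriv {f : ℝ → ℝ} {a : ℝ} (hf : CMOn f a) :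
    CMOn (fun x => -(deriv f x)) a := by
  obtain ⟨hs, hsign⟩ := hf
  refine ⟨(hs.deriv_of_isOpen isOpen_Ioi (by simp)).neg, fun m x hx => ?_⟩
  rw [iteratedDeriv_fun_neg, ← iteratedDeriv_succ']
  rw [show (-1:ℝ)^m * -(iteratedDeriv (m+1) f x)
      = (-1)^(m+1) * iteratedDeriv (m+1) f x by ring]
  exact hsign (m+1) x hx

lemma cmOn_mul_aux {a : ℝ} : ∀ m : ℕ, ∀ f g : ℝ → ℝ, CMOn f a → CMOn g a →
    ∀ x, a < x → 0 ≤ (-1:ℝ)^m * iteratedDeriv m (fun y => f y * g y) x := by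
  intro m
  induction m with
  | zero =>
    intro f g hf hg x hx
    simpa using mul_nonneg (by simpa using hf.2 0 x hx) (by simpa using hg.2 0 x hx)
  | succ m ih =>
    intro f g hf hg x hx
    have hfs := hf.1
    have hgs := hg.1
    have hdf : ContDiffOn ℝ (⊤ : ℕ∞) (deriv f) (Ioi a) := hfs.deriv_of_isOpen isOpen_Ioi (by simp)
    have hdg : ContDiffOn ℝ (⊤ : ℕ∞) (deriv g) (Ioi a) := hgs.deriv_of_isOpen isOpen_Ioi (by simp)
    have heq : deriv (fun y => f y * g y) =ᶠ[𝓝 x]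
        fun y => deriv f y * g y + f y * deriv g y := by
      filter_upwards [isOpen_Ioi.mem_nhds hx] with y hy
      have h1 : DifferentiableAt ℝ f y :=
        (hfs.contDiffAt (isOpen_Ioi.mem_nhds hy)).differentiableAt (by simp)
      have h2 : DifferentiableAt ℝ g y :=
        (hgs.contDiffAt (isOpen_Ioi.mem_nhds hy)).differentiableAt (by simp)
      exact deriv_fun_mul h1 h2
    rw [iteratedDeriv_succ', heq.iteratedDeriv_eq m,
      iteratedDeriv_add_at m isOpen_Ioi hx (hdf.mul hgs) (hfs.mul hdg)]
    have e1 : iteratedDeriv m (fun y => deriv f y * g y) x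
        = - iteratedDeriv m (fun y => (-(deriv f y)) * g y) x := by
      rw [show (fun y => deriv f y * g y) = fun y => -((-(deriv f y)) * g y) by
        funext y; ring, iteratedDeriv_fun_neg]
    have e2 : iteratedDeriv m (fun y => f y * deriv g y) x
        = - iteratedDeriv m (fun y => f y * (-(deriv g y))) x := by
      rw [show (fun y => f y * deriv g y) = fun y => -(f y * (-(deriv g y))) by
        funext y; ring, iteratedDeriv_fun_neg]
    rw [e1, e2]
    have H1 := ih (fun y => -(deriv f y)) g (cmOn_neg_deriv hf) hg x hx
    have H2 := ih f (fun y => -(deriv g y)) hf (cmOn_neg_deriv hg) x hx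
    set A := iteratedDeriv m (fun y => (-(deriv f y)) * g y) x with hA
    set B := iteratedDeriv m (fun y => f y * (-(deriv g y))) x with hB
    have : (-1:ℝ)^(m+1) * (-A + -B) = (-1)^m * A + (-1)^m * B := by ring
    rw [this]
    exact add_nonneg H1 H2

lemma CMOn.mul' {a : ℝ} {f g : ℝ → ℝ} (hf : CMOn f a) (hg : CMOn g a) :
    CMOn (fun y => f y * g y) a :=
  ⟨hf.1.mul hg.1, fun m x hx => cmOn_mul_aux m f g hf hg x hx⟩

lemma iteratedDeriv_affine_rpow (A B b : ℝ) (m : ℕ) :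
    ∀ x : ℝ, 0 < A + B * x →
    iteratedDeriv m (fun w => (A + B * w) ^ (-b)) x
      = (-1)^m * (∏ j ∈ Finset.range m, (b + j)) * B^m * (A + B*x) ^ (-b - m) := by
  induction m with
  | zero => intro x hx; simp
  | succ m ih =>
    intro x hx
    have hS : IsOpen {w : ℝ | 0 < A + B * w} :=
      isOpen_lt continuous_const (continuous_const.add (continuous_const.mul continuous_id))
    have heq : iteratedDeriv m (fun w => (A + B * w) ^ (-b)) =ᶠ[𝓝 x]
        fun w => (-1)^m * (∏ j ∈ Finset.range m, (b + j)) * B^m * (A + B*w) ^ (-b - m) := by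
      filter_upwards [hS.mem_nhds hx] with y hy using ih y hy
    rw [iteratedDeriv_succ, heq.deriv_eq]
    have hd : HasDerivAt (fun w : ℝ => A + B * w) B x := by
      simpa using ((hasDerivAt_id x).const_mul B).const_add A
    have hr : HasDerivAt (fun w => (A + B * w) ^ (-b - (m:ℝ)))
        (B * (-b - (m:ℝ)) * (A + B*x) ^ (-b - (m:ℝ) - 1)) x :=
      hd.rpow_const (Or.inl (ne_of_gt hx))
    rw [deriv_const_mul _ hr.differentiableAt, hr.deriv, Finset.prod_range_succ]
    rw [show -b - ((m+1 : ℕ):ℝ) = -b - (m:ℝ) - 1 by push_cast; ring]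
    ring

lemma cmOn_factor {A B b : ℝ} (hA : 0 < A) (hB : 0 < B) (hb : 0 < b) {a : ℝ} (ha : 0 ≤ a) :
    CMOn (fun w => (A + B * w) ^ (-b)) a := by
  have hpos : ∀ x : ℝ, a < x → 0 < A + B * x := fun x hx => by nlinarith
  constructor
  · intro x hx
    exact (((contDiff_const.add (contDiff_const.mul contDiff_id)).contDiffAt).rpow_const_of_ne
      (ne_of_gt (hpos x hx))).contDiffWithinAt
  · intro m x hx
    rw [iteratedDeriv_affine_rpow A B b m x (hpos x hx)]
    have h1 : (0:ℝ) ≤ ∏ j ∈ Finset.range m, (b + (j:ℝ)) :=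
      Finset.prod_nonneg fun j _ => by positivity
    have h2 : (0:ℝ) < (A + B*x) ^ (-b - (m:ℝ)) := rpow_pos_of_pos (hpos x hx) _
    have hsq : (-1:ℝ)^m * (-1:ℝ)^m = 1 := by
      rw [← pow_add, ← two_mul, pow_mul]; norm_num
    rw [show (-1:ℝ)^m * ((-1)^m * (∏ j ∈ Finset.range m, (b + (j:ℝ))) * B^m
        * (A + B*x) ^ (-b - (m:ℝ)))
      = ((-1:ℝ)^m * (-1:ℝ)^m) * ((∏ j ∈ Finset.range m, (b + (j:ℝ))) * B^m
        * (A + B*x) ^ (-b - (m:ℝ))) by ring, hsq, one_mul]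
    positivity

lemma cmOn_prod {a : ℝ} (m : ℕ) (h : ℕ → ℝ → ℝ) (hh : ∀ i < m, CMOn (h i) a) :
    CMOn (fun w => ∏ i ∈ Finset.range m, h i w) a := by
  induction m with
  | zero =>
    have e : (fun w : ℝ => ∏ i ∈ Finset.range 0, h i w) = fun _ => (1:ℝ) := by simp
    rw [e]; exact cmOn_const zero_le_one
  | succ k ih =>
    have h1 := ih fun i hi => hh i (hi.trans (Nat.lt_succ_self k))
    have h2 := hh k (Nat.lt_succ_self k)
    have e : (fun w : ℝ => ∏ i ∈ Finset.range (k+1), h i w)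
        = fun w => (∏ i ∈ Finset.range k, h i w) * h k w := by
      funext w; exact Finset.prod_range_succ _ _
    rw [e]; exact h1.mul' h2

theorem stmt_5 (n : ℕ) (c a : ℝ) (hc : 0 < c) (cs bs : ℕ → ℝ)
    (hcs : ∀ i < n, 0 < cs i) (hbs : ∀ i < n, 0 < bs i)
    (f : ℝ → ℝ)
    (hf : ∀ x : ℝ, 0 < x →
      f x = c * x ^ a * ∏ i ∈ Finset.range n, (1 + cs i * x) ^ (-(bs i))) :
    HCM f := by
  constructor
  · intro x hx
    rw [hf x hx]
    have h1 : 0 < x ^ a := rpow_pos_of_pos hx a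
    have h2 : 0 < ∏ i ∈ Finset.range n, (1 + cs i * x) ^ (-(bs i)) :=
      Finset.prod_pos fun i hi => rpow_pos_of_pos
        (by have := hcs i (Finset.mem_range.mp hi); nlinarith) _
    exact mul_pos (mul_pos hc h1) h2
  · intro u hu
    refine ⟨fun w => (c * u ^ a)^2 *
      ∏ i ∈ Finset.range n, ((1 + (cs i * u)^2) + (cs i * u) * w) ^ (-(bs i)), ?_, ?_⟩
    · refine CMOn.mul' (cmOn_const (sq_nonneg _)) (cmOn_prod n _ fun i hi => ?_)
      exact cmOn_factor (by positivity) (mul_pos (hcs i hi) hu) (hbs i hi) (by norm_num)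
    · intro v hv
      rw [hf (u*v) (mul_pos hu hv), hf (u/v) (div_pos hu hv),
        Real.mul_rpow hu.le hv.le, Real.div_rpow hu.le hv.le]
      have hva : (0:ℝ) < v ^ a := rpow_pos_of_pos hv a
      have hPQ : (∏ i ∈ Finset.range n, (1 + cs i * (u*v)) ^ (-(bs i))) *
          (∏ i ∈ Finset.range n, (1 + cs i * (u/v)) ^ (-(bs i)))
          = ∏ i ∈ Finset.range n,
            ((1 + (cs i * u)^2) + (cs i * u) * (v + v⁻¹)) ^ (-(bs i)) := by
        rw [← Finset.prod_mul_distrib]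
        refine Finset.prod_congr rfl fun i hi => ?_
        have hci := hcs i (Finset.mem_range.mp hi)
        have p1 : (0:ℝ) < 1 + cs i * (u*v) := by positivity
        have p2 : (0:ℝ) < 1 + cs i * (u/v) := by positivity
        rw [← Real.mul_rpow p1.le p2.le]
        congr 1
        field_simp
        ring
      calc c * (u ^ a * v ^ a) * (∏ i ∈ Finset.range n, (1 + cs i * (u*v)) ^ (-(bs i))) *
            (c * (u ^ a / v ^ a) * ∏ i ∈ Finset.range n, (1 + cs i * (u/v)) ^ (-(bs i)))
          = (c * u ^ a)^2 * (v ^ a / v ^ a) *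
            ((∏ i ∈ Finset.range n, (1 + cs i * (u*v)) ^ (-(bs i))) *
             (∏ i ∈ Finset.range n, (1 + cs i * (u/v)) ^ (-(bs i)))) := by ring
        _ = _ := by rw [div_self hva.ne', mul_one, hPQ]
end

section
/- If f : (0,∞) → (0,∞) is hyperbolically completely monotone, then for every a ∈ ℝ and every b with |b| ≤ 1, b ≠ 0, the function x ↦ x^a f(x^b) is hyperbolically completely monotone. -/
open Real

namespace StmtAux

open Set MeasureTheory Filter Metric
open scoped ContDiff

lemma iteratedDeriv_congr_on {s : Set ℝ} (hs : IsOpen s) {f g : ℝ → ℝ}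
    (h : ∀ y ∈ s, f y = g y) (n : ℕ) : ∀ x ∈ s, iteratedDeriv n f x = iteratedDeriv n g x := by
  induction n with
  | zero => intro x hx; simpa using h x hx
  | succ n ih =>
    intro x hx
    rw [iteratedDeriv_succ, iteratedDeriv_succ]
    exact Filter.EventuallyEq.deriv_eq
      (Filter.eventuallyEq_of_mem (hs.mem_nhds hx) fun y hy => ih y hy)

lemma diffAt {s : Set ℝ} (hs : IsOpen s) {f : ℝ → ℝ} (hf : ContDiffOn ℝ ∞ f s) {x : ℝ}
    (hx : x ∈ s) : DifferentiableAt ℝ f x :=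
  ((hf.differentiableOn (by simp)) x hx).differentiableAt (hs.mem_nhds hx)

lemma contDiffOn_deriv_of_isOpen {s : Set ℝ} (hs : IsOpen s) {f : ℝ → ℝ}
    (hf : ContDiffOn ℝ ∞ f s) : ContDiffOn ℝ ∞ (deriv f) s :=
  ((contDiffOn_infty_iff_deriv_of_isOpen hs).1 hf).2

lemma iteratedDeriv_neg' (n : ℕ) : ∀ (f : ℝ → ℝ) (x : ℝ),
    iteratedDeriv n (fun y => -f y) x = -iteratedDeriv n f x := by
  induction n with
  | zero => intro f x; simp
  | succ n ih =>
    intro f x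
    rw [iteratedDeriv_succ', iteratedDeriv_succ']
    have : (deriv fun y => -f y) = fun y => -deriv f y := funext fun y => deriv.neg
    rw [this]; exact ih _ _

lemma iteratedDeriv_add_on {s : Set ℝ} (hs : IsOpen s) (n : ℕ) :
    ∀ (u v : ℝ → ℝ), ContDiffOn ℝ ∞ u s → ContDiffOn ℝ ∞ v s → ∀ x ∈ s,
      iteratedDeriv n (fun y => u y + v y) x = iteratedDeriv n u x + iteratedDeriv n v x := by
  induction n with
  | zero => intro u v _ _ x _; simp
  | succ n ih =>
    intro u v hu hv x hx
    rw [iteratedDeriv_succ', iteratedDeriv_succ', iteratedDeriv_succ']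
    have h1 : ∀ y ∈ s, deriv (fun y => u y + v y) y = (fun y => deriv u y + deriv v y) y :=
      fun y hy => deriv_add (diffAt hs hu hy) (diffAt hs hv hy)
    rw [iteratedDeriv_congr_on hs h1 n x hx]
    exact ih _ _ (contDiffOn_deriv_of_isOpen hs hu) (contDiffOn_deriv_of_isOpen hs hv) x hx

lemma iteratedDeriv_const_mul_on {s : Set ℝ} (hs : IsOpen s) (c : ℝ) (n : ℕ) :
    ∀ (f : ℝ → ℝ), ContDiffOn ℝ ∞ f s → ∀ x ∈ s,
      iteratedDeriv n (fun y => c * f y) x = c * iteratedDeriv n f x := by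
  induction n with
  | zero => intro f _ x _; simp
  | succ n ih =>
    intro f hf x hx
    rw [iteratedDeriv_succ', iteratedDeriv_succ']
    have h1 : ∀ y ∈ s, deriv (fun y => c * f y) y = (fun y => c * deriv f y) y :=
      fun y hy => deriv_const_mul c (diffAt hs hf hy)
    rw [iteratedDeriv_congr_on hs h1 n x hx]
    exact ih _ (contDiffOn_deriv_of_isOpen hs hf) x hx

/-- completely monotone with only `C^∞` smoothness -/
def CMs (h : ℝ → ℝ) (a : ℝ) : Prop :=
  ContDiffOn ℝ ∞ h (Set.Ioi a) ∧ ∀ n : ℕ, ∀ x, a < x → 0 ≤ (-1:ℝ)^n * iteratedDeriv n h x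

lemma CMs.of_CMOn {h : ℝ → ℝ} {a : ℝ} (hh : CMOn h a) : CMs h a :=
  ⟨hh.1.of_le le_rfl, hh.2⟩

lemma cms_one {a : ℝ} : CMs (fun _ => (1:ℝ)) a := by
  constructor
  · exact contDiffOn_const
  · intro n x _
    cases n with
    | zero => simp
    | succ n =>
      rw [iteratedDeriv_succ']
      have : (deriv fun _ : ℝ => (1:ℝ)) = fun _ => (0:ℝ) := funext fun y => deriv_const y 1
      rw [this]
      have hz : ∀ m : ℕ, iteratedDeriv m (fun _ : ℝ => (0:ℝ)) x = 0 := by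
        intro m
        induction m with
        | zero => simp
        | succ m ihm =>
          rw [iteratedDeriv_succ']
          have hd0 : (deriv fun _ : ℝ => (0:ℝ)) = fun _ => (0:ℝ) := funext fun y => deriv_const y 0
          rw [hd0]; exact ihm
      rw [hz n]; simp

lemma CMs.negDeriv {h : ℝ → ℝ} {a : ℝ} (hh : CMs h a) : CMs (fun x => -deriv h x) a := by
  constructor
  · exact (contDiffOn_deriv_of_isOpen isOpen_Ioi hh.1).neg
  · intro n x hx
    have e : iteratedDeriv n (fun y => -deriv h y) x = -iteratedDeriv (n+1) h x := by
      rw [iteratedDeriv_neg' n (deriv h) x, iteratedDeriv_succ']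
    rw [e]
    have h2 := hh.2 (n+1) x hx
    have e2 : (-1:ℝ)^n * -iteratedDeriv (n+1) h x = (-1)^(n+1) * iteratedDeriv (n+1) h x := by
      rw [pow_succ]; ring
    rw [e2]; exact h2

lemma CMs.nonneg {h : ℝ → ℝ} {a : ℝ} (hh : CMs h a) {x : ℝ} (hx : a < x) : 0 ≤ h x := by
  have := hh.2 0 x hx; simpa using this

lemma CMs.mul {f g : ℝ → ℝ} {a : ℝ} (hf : CMs f a) (hg : CMs g a) :
    CMs (fun x => f x * g x) a := by
  have H : ∀ n : ℕ, ∀ f g : ℝ → ℝ, CMs f a → CMs g a → ∀ x, a < x →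
      0 ≤ (-1:ℝ)^n * iteratedDeriv n (fun y => f y * g y) x := by
    intro n
    induction n with
    | zero =>
      intro f g hf hg x hx
      simpa using mul_nonneg (hf.nonneg hx) (hg.nonneg hx)
    | succ n ih =>
      intro f g hf hg x hx
      have hx' : x ∈ Set.Ioi a := hx
      have hd : ∀ y ∈ Set.Ioi a, deriv (fun z => f z * g z) y
          = (fun z => -((fun w => -deriv f w * g w) z + (fun w => f w * -deriv g w) z)) y := by
        intro y hy
        rw [deriv_fun_mul (diffAt isOpen_Ioi hf.1 hy) (diffAt isOpen_Ioi hg.1 hy)]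
        simp; ring
      rw [iteratedDeriv_succ', iteratedDeriv_congr_on isOpen_Ioi hd n x hx',
        iteratedDeriv_neg',
        iteratedDeriv_add_on isOpen_Ioi n _ _ (hf.negDeriv.1.mul hg.1) (hf.1.mul hg.negDeriv.1) x hx']
      have t1 : 0 ≤ (-1:ℝ)^n * iteratedDeriv n (fun w => -deriv f w * g w) x :=
        ih _ _ hf.negDeriv hg x hx
      have t2 : 0 ≤ (-1:ℝ)^n * iteratedDeriv n (fun w => f w * -deriv g w) x :=
        ih _ _ hf hg.negDeriv x hx
      have e : (-1:ℝ)^(n+1) * -(iteratedDeriv n (fun w => -deriv f w * g w) x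
            + iteratedDeriv n (fun w => f w * -deriv g w) x)
          = (-1:ℝ)^n * iteratedDeriv n (fun w => -deriv f w * g w) x
            + (-1:ℝ)^n * iteratedDeriv n (fun w => f w * -deriv g w) x := by
        rw [pow_succ]; ring
      rw [e]; linarith
  exact ⟨hf.1.mul hg.1, fun n x hx => H n f g hf hg x hx⟩


lemma cms_comp {A a : ℝ} {ψ w : ℝ → ℝ}
    (hψ : ContDiffOn ℝ ∞ ψ (Set.Ioi a)) (hmap : ∀ x, a < x → A < ψ x)
    (hw : CMs w a) (hd : ∀ x, a < x → HasDerivAt ψ (w x) x)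
    {f : ℝ → ℝ} (hf : CMs f A) : CMs (fun x => f (ψ x)) a := by
  have hmapsTo : Set.MapsTo ψ (Set.Ioi a) (Set.Ioi A) := fun x hx => hmap x hx
  have hcomp0 : ∀ {f : ℝ → ℝ}, CMs f A → ContDiffOn ℝ ∞ (fun x => f (ψ x)) (Set.Ioi a) := by
    intro f hf
    have := hf.1.comp hψ hmapsTo
    simpa [Function.comp_def] using this
  have H : ∀ n : ℕ, ∀ f c : ℝ → ℝ, CMs f A → CMs c a → ∀ x, a < x →
      0 ≤ (-1:ℝ)^n * iteratedDeriv n (fun y => f (ψ y) * c y) x := by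
    intro n
    induction n with
    | zero =>
      intro f c hf hc x hx
      simpa using mul_nonneg (hf.nonneg (hmap x hx)) (hc.nonneg hx)
    | succ n ih =>
      intro f c hf hc x hx
      have hx' : x ∈ Set.Ioi a := hx
      have hder : ∀ y ∈ Set.Ioi a, deriv (fun z => f (ψ z) * c z) y
          = (fun z => -((fun y => -deriv f (ψ y) * (w y * c y)) z
              + (fun y => f (ψ y) * -deriv c y) z)) y := by
        intro y hy
        have h1 : HasDerivAt (fun z => f (ψ z)) (deriv f (ψ y) * w y) y := by
          have := HasDerivAt.comp y
            ((diffAt isOpen_Ioi hf.1 (hmap y hy)).hasDerivAt) (hd y hy)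
          simpa [Function.comp_def] using this
        rw [deriv_fun_mul h1.differentiableAt (diffAt isOpen_Ioi hc.1 hy), h1.deriv]
        simp; ring
      have C1 : ContDiffOn ℝ ∞ (fun y => -deriv f (ψ y) * (w y * c y)) (Set.Ioi a) := by
        exact (hcomp0 hf.negDeriv).mul (hw.1.mul hc.1)
      have C2 : ContDiffOn ℝ ∞ (fun y => f (ψ y) * -deriv c y) (Set.Ioi a) :=
        (hcomp0 hf).mul hc.negDeriv.1
      rw [iteratedDeriv_succ', iteratedDeriv_congr_on isOpen_Ioi hder n x hx',
        iteratedDeriv_neg', iteratedDeriv_add_on isOpen_Ioi n _ _ C1 C2 x hx']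
      have t1 : 0 ≤ (-1:ℝ)^n * iteratedDeriv n (fun y => -deriv f (ψ y) * (w y * c y)) x :=
        ih _ _ hf.negDeriv (hw.mul hc) x hx
      have t2 : 0 ≤ (-1:ℝ)^n * iteratedDeriv n (fun y => f (ψ y) * -deriv c y) x :=
        ih _ _ hf hc.negDeriv x hx
      have e : (-1:ℝ)^(n+1) * -(iteratedDeriv n (fun y => -deriv f (ψ y) * (w y * c y)) x
            + iteratedDeriv n (fun y => f (ψ y) * -deriv c y) x)
          = (-1:ℝ)^n * iteratedDeriv n (fun y => -deriv f (ψ y) * (w y * c y)) x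
            + (-1:ℝ)^n * iteratedDeriv n (fun y => f (ψ y) * -deriv c y) x := by
        rw [pow_succ]; ring
      rw [e]; linarith
  refine ⟨hcomp0 hf, fun n x hx => ?_⟩
  have := H n f (fun _ => 1) hf cms_one x hx
  simpa using this

lemma cms_of_chain {a : ℝ} (F : ℕ → ℝ → ℝ)
    (hd : ∀ n x, a < x → HasDerivAt (F n) (F (n+1) x) x)
    (hsgn : ∀ n x, a < x → 0 ≤ (-1:ℝ)^n * F n x) : CMs (F 0) a := by
  have hderiv : ∀ n, ∀ y ∈ Set.Ioi a, deriv (F n) y = F (n+1) y :=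
    fun n y hy => (hd n y hy).deriv
  have hsmooth : ∀ (m : ℕ) (n : ℕ), ContDiffOn ℝ m (F n) (Set.Ioi a) := by
    intro m
    induction m with
    | zero =>
      intro n
      rw [show ((0:ℕ) : WithTop ℕ∞) = 0 from rfl, contDiffOn_zero]
      exact fun x hx => ((hd n x hx).differentiableAt.continuousAt).continuousWithinAt
    | succ m ih =>
      intro n
      rw [show (((m+1):ℕ) : WithTop ℕ∞) = (m : WithTop ℕ∞) + 1 by norm_cast,
        contDiffOn_succ_iff_deriv_of_isOpen isOpen_Ioi]
      refine ⟨fun x hx => (hd n x hx).differentiableAt.differentiableWithinAt, ?_, ?_⟩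
      · intro h; exact absurd h (by simp)
      · exact (ih (n+1)).congr fun y hy => (hderiv n y hy)
  have hiter : ∀ n k, ∀ x, a < x → iteratedDeriv n (F k) x = F (n+k) x := by
    intro n
    induction n with
    | zero => intro k x _; simp
    | succ n ih =>
      intro k x hx
      rw [iteratedDeriv_succ',
        iteratedDeriv_congr_on isOpen_Ioi (fun y hy => hderiv k y hy) n x hx,
        ih (k+1) x hx]
      congr 1; omega
  refine ⟨contDiffOn_infty.2 fun m => hsmooth m 0, fun n x hx => ?_⟩
  rw [show iteratedDeriv n (F 0) x = F (n+0) x from hiter n 0 x hx]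
  simpa using hsgn n x hx


lemma integrableOn_of_bounds {f : ℝ → ℝ} (hcont : ContinuousOn f (Set.Ioi 0))
    {C₁ C₂ c : ℝ} (hc : c < -1)
    (h1 : ∀ y ∈ Set.Ioc (0:ℝ) 1, ‖f y‖ ≤ C₁)
    (h2 : ∀ y ∈ Set.Ioi (1:ℝ), ‖f y‖ ≤ C₂ * y ^ c) :
    MeasureTheory.IntegrableOn f (Set.Ioi (0:ℝ)) := by
  have hsub1 : Set.Ioc (0:ℝ) 1 ⊆ Set.Ioi 0 := Set.Ioc_subset_Ioi_self
  have hsub2 : Set.Ioi (1:ℝ) ⊆ Set.Ioi 0 := Set.Ioi_subset_Ioi zero_le_one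
  have i1 : IntegrableOn f (Set.Ioc (0:ℝ) 1) := by
    refine Integrable.mono' (g := fun _ => C₁) ?_ ?_ ?_
    · exact (integrableOn_const measure_Ioc_lt_top.ne)
    · exact (hcont.mono hsub1).aestronglyMeasurable measurableSet_Ioc
    · exact (ae_restrict_iff' measurableSet_Ioc).2 (Filter.Eventually.of_forall h1)
  have i2 : IntegrableOn f (Set.Ioi (1:ℝ)) := by
    refine Integrable.mono' (g := fun y => C₂ * y ^ c) ?_ ?_ ?_
    · exact (integrableOn_Ioi_rpow_of_lt hc zero_lt_one).const_mul C₂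
    · exact (hcont.mono hsub2).aestronglyMeasurable measurableSet_Ioi
    · exact (ae_restrict_iff' measurableSet_Ioi).2 (Filter.Eventually.of_forall h2)
  have := i1.union i2
  rwa [Set.Ioc_union_Ioi_eq_Ioi zero_le_one] at this

noncomputable def Jint (β : ℝ) (n : ℕ) (t : ℝ) : ℝ :=
  ∫ y in Set.Ioi (0:ℝ), y ^ (β + n) / (y^2 + t*y + 1)^(n+1)

lemma den_pos {t y : ℝ} (ht : 0 ≤ t) (hy : 0 < y) : 0 < y^2 + t*y + 1 := by nlinarith

lemma J_contOn {β : ℝ} (n : ℕ) {t : ℝ} (ht : 0 ≤ t) :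
    ContinuousOn (fun y => y ^ (β + n) / (y^2 + t*y + 1)^(n+1)) (Set.Ioi (0:ℝ)) := by
  apply ContinuousOn.div
  · exact ContinuousOn.rpow_const continuousOn_id fun y hy => Or.inl (ne_of_gt hy)
  · exact (((continuous_id.pow 2).add ((continuous_const.mul continuous_id))).add
      continuous_const).pow (n+1) |>.continuousOn
  · exact fun y hy => pow_ne_zero _ (ne_of_gt (den_pos ht hy))

lemma J_integrand_nonneg {β : ℝ} (hβ0 : 0 ≤ β) (n : ℕ) {t y : ℝ} (ht : 0 ≤ t) (hy : 0 < y) :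
    0 ≤ y ^ (β + n) / (y^2 + t*y + 1)^(n+1) :=
  div_nonneg (Real.rpow_nonneg hy.le _) (pow_nonneg (den_pos ht hy).le _)

lemma J_den_lower2 {t y : ℝ} (ht : 0 ≤ t) (hy : 0 < y) (m : ℕ) :
    (y:ℝ)^(2*m) ≤ (y^2 + t*y + 1)^m := by
  have h : y^2 ≤ y^2 + t*y + 1 := by nlinarith
  calc (y:ℝ)^(2*m) = (y^2)^m := by rw [← pow_mul]
    _ ≤ (y^2 + t*y + 1)^m := pow_le_pow_left₀ (sq_nonneg _) h m

lemma J_integrableOn {β : ℝ} (hβ0 : 0 < β) (hβ1 : β < 1) (n : ℕ) {t : ℝ} (ht0 : 0 ≤ t) :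
    MeasureTheory.IntegrableOn (fun y => y ^ (β + n) / (y^2 + t*y + 1)^(n+1)) (Set.Ioi (0:ℝ)) := by
  apply integrableOn_of_bounds (J_contOn n ht0) (C₁ := 1) (C₂ := 1)
    (c := β + n - (2*(n+1)))
  · push_cast; linarith
  · intro y hy
    obtain ⟨hy0, hy1⟩ := hy
    rw [Real.norm_eq_abs, abs_of_nonneg (J_integrand_nonneg hβ0.le n ht0 hy0)]
    apply div_le_one_of_le₀
    · calc y ^ (β + n) ≤ 1 := Real.rpow_le_one hy0.le hy1 (by positivity)
        _ ≤ (y^2 + t*y + 1)^(n+1) := one_le_pow₀ (by nlinarith)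
    · exact pow_nonneg (den_pos ht0 hy0).le _
  · intro y hy
    have hy1 : (1:ℝ) < y := hy
    have hy0 : (0:ℝ) < y := by linarith
    rw [Real.norm_eq_abs, abs_of_nonneg (J_integrand_nonneg hβ0.le n ht0 hy0), one_mul]
    have h1 : y ^ (β + n) / (y^2 + t*y + 1)^(n+1) ≤ y ^ (β + n) / y^(2*(n+1)) := by
      apply div_le_div_of_nonneg_left (Real.rpow_nonneg hy0.le _)
        (by positivity) (J_den_lower2 ht0 hy0 (n+1))
    calc y ^ (β + n) / (y^2 + t*y + 1)^(n+1) ≤ y ^ (β + n) / y^(2*(n+1)) := h1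
      _ = y ^ (β + n - (2*(n+1) : ℕ)) := by
          rw [Real.rpow_sub hy0, Real.rpow_natCast]
      _ = y ^ (β + n - (2*(n+1) : ℝ)) := by norm_num


lemma Jint_hasDerivAt {β : ℝ} (hβ0 : 0 < β) (hβ1 : β < 1) (n : ℕ) {t₀ : ℝ} (ht : 2 < t₀) :
    HasDerivAt (Jint β n) (-(((n:ℝ)+1) * Jint β (n+1) t₀)) t₀ := by
  have ht0 : (0:ℝ) ≤ t₀ := by linarith
  have hε0 : 0 < (t₀-2)/2 := by linarith
  have hball : ∀ x ∈ ball t₀ ((t₀-2)/2), 2 < x := by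
    intro x hx
    rw [mem_ball, Real.dist_eq] at hx
    have h := abs_lt.1 hx
    linarith [h.1]
  have key := hasDerivAt_integral_of_dominated_loc_of_deriv_le
    (μ := MeasureTheory.volume.restrict (Set.Ioi (0:ℝ)))
    (F := fun t y => y ^ (β + n) / (y^2 + t*y + 1)^(n+1))
    (F' := fun t y => -(((n:ℝ)+1) * (y ^ (β + ((n+1:ℕ):ℝ)) / (y^2 + t*y + 1)^(n+2))))
    (x₀ := t₀) (s := ball t₀ ((t₀-2)/2))
    (bound := fun y => ((n:ℝ)+1) * (y ^ (β + ((n+1:ℕ):ℝ)) / (y^2 + 2*y + 1)^(n+2)))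
    (ball_mem_nhds t₀ hε0)
    (Filter.eventually_of_mem (ball_mem_nhds t₀ hε0) fun x hx =>
      (J_contOn n (le_of_lt (lt_trans zero_lt_two (hball x hx)))).aestronglyMeasurable
        measurableSet_Ioi)
    (J_integrableOn hβ0 hβ1 n ht0)
    ((ContinuousOn.neg (ContinuousOn.mul continuousOn_const (J_contOn (n+1) ht0))).aestronglyMeasurable measurableSet_Ioi)
    ?_ ?_ ?_
  · have h2 := key.2
    have hval : (∫ y in Set.Ioi (0:ℝ),
        -(((n:ℝ)+1) * (y ^ (β + ((n+1:ℕ):ℝ)) / (y^2 + t₀*y + 1)^(n+2))))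
        = -(((n:ℝ)+1) * Jint β (n+1) t₀) := by
      rw [MeasureTheory.integral_neg, MeasureTheory.integral_const_mul]
      rfl
    rw [hval] at h2
    exact h2
  · refine (ae_restrict_iff' measurableSet_Ioi).2 (Filter.Eventually.of_forall ?_)
    intro y hy x hx
    have hy0 : (0:ℝ) < y := hy
    have hx2 : 2 < x := hball x hx
    have hb1 : y^2 + 2*y + 1 ≤ y^2 + x*y + 1 := by nlinarith
    have hb2 : (y^2 + 2*y + 1)^(n+2) ≤ (y^2 + x*y + 1)^(n+2) :=
      pow_le_pow_left₀ (den_pos (by norm_num) hy0).le hb1 _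
    have hpos2 : (0:ℝ) < (y^2 + 2*y + 1)^(n+2) := pow_pos (den_pos (by norm_num) hy0) _
    rw [Real.norm_eq_abs, abs_neg, abs_of_nonneg (by positivity)]
    exact mul_le_mul_of_nonneg_left
      (div_le_div_of_nonneg_left (Real.rpow_nonneg hy0.le _) hpos2 hb2)
      (by positivity)
  · exact (J_integrableOn hβ0 hβ1 (n+1) (by norm_num)).const_mul ((n:ℝ)+1)
  · refine (ae_restrict_iff' measurableSet_Ioi).2 (Filter.Eventually.of_forall ?_)
    intro y hy x hx
    have hy0 : (0:ℝ) < y := hy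
    have hx2 : 2 < x := hball x hx
    have hP : HasDerivAt (fun t => y^2 + t*y + 1) y x := by
      simpa using (((hasDerivAt_mul_const y).const_add (y^2)).add_const 1)
    have hPpos : 0 < y^2 + x*y + 1 := den_pos (by linarith) hy0
    have hPow := hP.pow (n+1)
    have hInv := hPow.inv (pow_ne_zero _ (ne_of_gt hPpos))
    have hFinal := hInv.const_mul (y ^ (β + n))
    have hfun : (fun t => y ^ (β+(n:ℝ)) * ((y^2 + t*y + 1)^(n+1))⁻¹)
        = fun t => y ^ (β+(n:ℝ)) / (y^2 + t*y + 1)^(n+1) := by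
      funext t; rw [div_eq_mul_inv]
    replace hFinal : HasDerivAt (fun t => y ^ (β+(n:ℝ)) / (y^2 + t*y + 1)^(n+1)) (y ^ (β + n) * (-(((n + 1 : ℕ) : ℝ) * (y ^ 2 + x * y + 1) ^ n * y) / ((y ^ 2 + x * y + 1) ^ (n + 1)) ^ 2)) x := by
      rw [← hfun]; exact hFinal
    refine hFinal.congr_deriv ?_
    beta_reduce
    have hPne : (y^2 + x*y + 1) ≠ 0 := ne_of_gt hPpos
    have hyr : y ^ (β + ((n+1:ℕ):ℝ)) = y ^ (β + (n:ℝ)) * y := by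
      push_cast
      rw [show β + ((n:ℝ)+1) = (β + (n:ℝ)) + 1 by ring, Real.rpow_add_one (ne_of_gt hy0)]
    rw [hyr]
    field_simp
    push_cast
    ring


noncomputable def Dd (β a b : ℝ) : ℝ := ∫ y in Set.Ioi (0:ℝ), y^β * (1/(y+a) - 1/(y+b))

lemma Dd_contOn {β a b : ℝ} (ha : 0 < a) (hb : 0 < b) :
    ContinuousOn (fun y => y^β * (1/(y+a) - 1/(y+b))) (Set.Ioi (0:ℝ)) := by
  apply ContinuousOn.mul
  · exact ContinuousOn.rpow_const continuousOn_id fun y hy => Or.inl (ne_of_gt hy)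
  · apply ContinuousOn.sub
    · exact continuousOn_const.div ((continuous_id.add continuous_const).continuousOn)
        fun y hy => by have : (0:ℝ) < y := hy; positivity
    · exact continuousOn_const.div ((continuous_id.add continuous_const).continuousOn)
        fun y hy => by have : (0:ℝ) < y := hy; positivity

lemma Dd_integrableOn {β : ℝ} (hβ0 : 0 < β) (hβ1 : β < 1) {a b : ℝ} (ha : 0 < a) (hb : 0 < b) :
    MeasureTheory.IntegrableOn (fun y => y^β * (1/(y+a) - 1/(y+b))) (Set.Ioi (0:ℝ)) := by
  apply integrableOn_of_bounds (Dd_contOn ha hb) (C₁ := 1/a + 1/b) (C₂ := |b - a|) (c := β - 2)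
  · linarith
  · rintro y ⟨hy0, hy1⟩
    have h1 : |y^β| ≤ 1 := by
      rw [abs_of_nonneg (Real.rpow_nonneg hy0.le β)]
      exact Real.rpow_le_one hy0.le hy1 hβ0.le
    have h2 : |1/(y+a) - 1/(y+b)| ≤ 1/a + 1/b := by
      refine (abs_sub _ _).trans ?_
      gcongr
      · rw [abs_of_nonneg (by positivity)]
        exact one_div_le_one_div_of_le ha (by linarith)
      · rw [abs_of_nonneg (by positivity)]
        exact one_div_le_one_div_of_le hb (by linarith)
    calc ‖y^β * (1/(y+a) - 1/(y+b))‖ = |y^β| * |1/(y+a) - 1/(y+b)| := abs_mul _ _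
      _ ≤ 1 * (1/a + 1/b) := mul_le_mul h1 h2 (abs_nonneg _) zero_le_one
      _ = 1/a + 1/b := one_mul _
  · intro y hy
    have hy1 : (1:ℝ) < y := hy
    have hy0 : (0:ℝ) < y := by linarith
    have hrw : 1/(y+a) - 1/(y+b) = (b-a)/((y+a)*(y+b)) := by
      field_simp
      try ring
    have hden : y^2 ≤ (y+a)*(y+b) := by nlinarith
    have hstep : |b-a|/((y+a)*(y+b)) ≤ |b-a|/y^2 :=
      div_le_div_of_nonneg_left (abs_nonneg _) (by positivity) hden
    calc ‖y^β * (1/(y+a) - 1/(y+b))‖ = y^β * (|b-a|/((y+a)*(y+b))) := by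
          rw [hrw, Real.norm_eq_abs, abs_mul, abs_of_nonneg (Real.rpow_nonneg hy0.le β),
            abs_div, abs_of_nonneg (by positivity : (0:ℝ) ≤ (y+a)*(y+b))]
      _ ≤ y^β * (|b-a|/y^2) := mul_le_mul_of_nonneg_left hstep (Real.rpow_nonneg hy0.le β)
      _ = |b-a| * (y^β/y^2) := by ring
      _ = |b-a| * y^(β-2) := by
          rw [show y^β/y^(2:ℕ) = y^β/y^((2:ℕ):ℝ) by rw [Real.rpow_natCast],
            ← Real.rpow_sub hy0]
          norm_num

lemma Dd_add {β : ℝ} (hβ0 : 0 < β) (hβ1 : β < 1) {a b c : ℝ} (ha : 0 < a) (hb : 0 < b)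
    (hc : 0 < c) : Dd β a c = Dd β a b + Dd β b c := by
  rw [Dd, Dd, Dd, ← MeasureTheory.integral_add (Dd_integrableOn hβ0 hβ1 ha hb)
    (Dd_integrableOn hβ0 hβ1 hb hc)]
  congr 1
  funext y
  ring

lemma Dd_antisymm {β a b : ℝ} : Dd β a b = -Dd β b a := by
  rw [Dd, Dd, ← MeasureTheory.integral_neg]
  congr 1
  funext y
  ring

lemma Dd_scale {β : ℝ} {a b c : ℝ} (hc : 0 < c) (ha : 0 < a) (hb : 0 < b) :
    Dd β (c*a) (c*b) = c^β * Dd β a b := by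
  have h := MeasureTheory.integral_comp_mul_left_Ioi
    (fun y => y^β * (1/(y+c*a) - 1/(y+c*b))) 0 hc
  simp only [mul_zero] at h
  have hpt : Set.EqOn (fun x => (fun y => y^β * (1/(y+c*a) - 1/(y+c*b))) (c*x))
      (fun x => (c^β * c⁻¹) * (x^β * (1/(x+a) - 1/(x+b)))) (Set.Ioi (0:ℝ)) := by
    intro x hx
    have hx0 : (0:ℝ) < x := hx
    have hxa : (0:ℝ) < x + a := by linarith
    have hxb : (0:ℝ) < x + b := by linarith
    simp only
    rw [show c*x + c*a = c*(x+a) by ring, show c*x + c*b = c*(x+b) by ring,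
      Real.mul_rpow hc.le hx0.le]
    field_simp
  have h2 : Dd β (c*a) (c*b) = c • ∫ x in Set.Ioi (0:ℝ),
      (fun y => y^β * (1/(y+c*a) - 1/(y+c*b))) (c*x) := by
    rw [h, smul_smul, mul_inv_cancel₀ (ne_of_gt hc), one_smul]
    rfl
  rw [h2, MeasureTheory.setIntegral_congr_fun measurableSet_Ioi hpt,
    MeasureTheory.integral_const_mul, smul_eq_mul, ← Dd]
  field_simp

lemma Dd_pos {β : ℝ} (hβ0 : 0 < β) (hβ1 : β < 1) : 0 < Dd β 1 2 := by
  rw [Dd]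
  have hnn : 0 ≤ᶠ[MeasureTheory.ae (MeasureTheory.volume.restrict (Set.Ioi (0:ℝ)))]
      fun y => y^β * (1/(y+1) - 1/(y+2)) := by
    refine (ae_restrict_iff' measurableSet_Ioi).2 (Filter.Eventually.of_forall ?_)
    intro y hy
    have hy0 : (0:ℝ) < y := hy
    have : 1/(y+2) ≤ 1/(y+1) := one_div_le_one_div_of_le (by linarith) (by linarith)
    have h2 : 0 ≤ 1/(y+1) - 1/(y+2) := by linarith
    positivity
  rw [MeasureTheory.setIntegral_pos_iff_support_of_nonneg_ae hnn
    (Dd_integrableOn hβ0 hβ1 one_pos two_pos)]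
  have hsub : Set.Ioi (0:ℝ) ⊆ Function.support (fun y => y^β * (1/(y+1) - 1/(y+2))) := by
    intro y hy
    have hy0 : (0:ℝ) < y := hy
    have h1 : 1/(y+2) < 1/(y+1) := one_div_lt_one_div_of_lt (by linarith) (by linarith)
    have h2 : 0 < 1/(y+1) - 1/(y+2) := by linarith
    have h3 : 0 < y^β * (1/(y+1) - 1/(y+2)) := mul_pos (Real.rpow_pos_of_pos hy0 β) h2
    exact ne_of_gt h3
  calc (0:ENNReal) < MeasureTheory.volume (Set.Ioi (0:ℝ)) := by simp [Real.volume_Ioi]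
    _ ≤ MeasureTheory.volume (Function.support (fun y => y^β * (1/(y+1) - 1/(y+2)))
        ∩ Set.Ioi (0:ℝ)) := MeasureTheory.measure_mono (Set.subset_inter hsub le_rfl)

lemma Dd_mul_law {β : ℝ} (hβ0 : 0 < β) (hβ1 : β < 1) {lam x : ℝ} (hlam : 0 < lam)
    (hx : 0 < x) : Dd β 1 (lam*x) = Dd β 1 lam + lam^β * Dd β 1 x := by
  rw [Dd_add hβ0 hβ1 one_pos hlam (mul_pos hlam hx)]
  have h := Dd_scale (β := β) hlam one_pos hx
  rw [mul_one] at h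
  rw [h]

lemma d_formula {β : ℝ} (hβ0 : 0 < β) (hβ1 : β < 1) {x : ℝ} (hx : 0 < x) :
    Dd β 1 x * (2^β - 1) = Dd β 1 2 * (x^β - 1) := by
  have h1 := Dd_mul_law hβ0 hβ1 two_pos hx
  have h2 := Dd_mul_law hβ0 hβ1 hx two_pos
  rw [show (2:ℝ)*x = x*2 by ring] at h1
  linear_combination h2 - h1

lemma two_lt_add_inv {x : ℝ} (hx : 1 < x) : 2 < x + x⁻¹ := by
  have hx0 : 0 < x := lt_trans one_pos hx
  have h : 0 < (x-1)^2 := pow_pos (sub_pos.2 hx) 2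
  have e : x + 1/x - 2 = (x-1)^2/x := by field_simp; ring
  have h2 := div_pos h hx0
  have : x⁻¹ = 1/x := (one_div x).symm
  rw [this]
  linarith

lemma one_lt_two_rpow {β : ℝ} (hβ0 : 0 < β) : 1 < (2:ℝ)^β :=
  (Real.one_lt_rpow_iff_of_pos two_pos).2 (Or.inl ⟨one_lt_two, hβ0⟩)

lemma key_identity {β : ℝ} (hβ0 : 0 < β) (hβ1 : β < 1) {q : ℝ} (hq : 1 < q) :
    (q - q⁻¹) * Jint β 0 (q + q⁻¹) = (Dd β 1 2 / (2^β - 1)) * (q^β - (q^β)⁻¹) := by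
  have hq0 : 0 < q := lt_trans one_pos hq
  have hqi : 0 < q⁻¹ := by positivity
  set t := q + q⁻¹ with htdef
  have ht2 : 2 < t := two_lt_add_inv hq
  -- step 1 : Dd β q⁻¹ q = (q - q⁻¹) * Jint β 0 t
  have hpt : Set.EqOn (fun y => y^β * (1/(y+q⁻¹) - 1/(y+q)))
      (fun y => (q - q⁻¹) * (y ^ (β + ((0:ℕ):ℝ)) / (y^2 + t*y + 1)^(0+1))) (Set.Ioi (0:ℝ)) := by
    intro y hy
    have hy0 : (0:ℝ) < y := hy
    have h1 : (0:ℝ) < y + q⁻¹ := by linarith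
    have h2 : (0:ℝ) < y + q := by linarith
    have hden : (y+q⁻¹)*(y+q) = y^2 + t*y + 1 := by
      have : q⁻¹ * q = 1 := inv_mul_cancel₀ (ne_of_gt hq0)
      rw [htdef]; nlinarith [this]
    simp only [Nat.cast_zero, add_zero, pow_one, zero_add]
    rw [← hden]
    field_simp
    ring
  have step1 : Dd β q⁻¹ q = (q - q⁻¹) * Jint β 0 t := by
    rw [Dd, MeasureTheory.setIntegral_congr_fun measurableSet_Ioi hpt,
      MeasureTheory.integral_const_mul, Jint]
  -- step 2 : Dd β q⁻¹ q = d q - d q⁻¹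
  have step2 : Dd β q⁻¹ q = Dd β 1 q - Dd β 1 q⁻¹ := by
    have h := Dd_add hβ0 hβ1 hqi one_pos hq0
    have h2 : Dd β q⁻¹ 1 = -Dd β 1 q⁻¹ := Dd_antisymm
    linarith
  have h2β : (0:ℝ) < 2^β - 1 := by linarith [one_lt_two_rpow hβ0]
  have hdq := d_formula hβ0 hβ1 hq0
  have hdqi := d_formula hβ0 hβ1 hqi
  have hir : (q⁻¹:ℝ)^β = (q^β)⁻¹ := Real.inv_rpow hq0.le β
  rw [hir] at hdqi
  rw [← step1, step2, div_mul_eq_mul_div, eq_div_iff (ne_of_gt h2β)]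
  linear_combination hdq - hdqi


noncomputable def Qf (t : ℝ) : ℝ := (t + Real.sqrt (t^2 - 4))/2

noncomputable def psif (β t : ℝ) : ℝ := Qf t ^ β + (Qf t ^ β)⁻¹

lemma disc_pos {t : ℝ} (ht : 2 < t) : 0 < t^2 - 4 := by nlinarith

lemma Q_gt_one {t : ℝ} (ht : 2 < t) : 1 < Qf t := by
  have h := Real.sqrt_nonneg (t^2-4)
  rw [Qf]; linarith

lemma Q_pos {t : ℝ} (ht : 2 < t) : 0 < Qf t := lt_trans one_pos (Q_gt_one ht)

lemma Q_inv {t : ℝ} (ht : 2 < t) : (Qf t)⁻¹ = (t - Real.sqrt (t^2 - 4))/2 := by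
  have hs2 : Real.sqrt (t^2-4) ^ 2 = t^2 - 4 := Real.sq_sqrt (disc_pos ht).le
  have hmul : Qf t * ((t - Real.sqrt (t^2 - 4))/2) = 1 := by
    rw [Qf]; field_simp; linear_combination -hs2
  exact inv_eq_of_mul_eq_one_right hmul

lemma Q_add_inv {t : ℝ} (ht : 2 < t) : Qf t + (Qf t)⁻¹ = t := by
  rw [Q_inv ht, Qf]; ring

lemma Q_sub_inv {t : ℝ} (ht : 2 < t) : Qf t - (Qf t)⁻¹ = Real.sqrt (t^2 - 4) := by
  rw [Q_inv ht, Qf]; ring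

lemma Q_hasDerivAt {t : ℝ} (ht : 2 < t) : HasDerivAt Qf (Qf t / Real.sqrt (t^2 - 4)) t := by
  have hd := disc_pos ht
  have hs : 0 < Real.sqrt (t^2-4) := Real.sqrt_pos.2 hd
  have h1 : HasDerivAt (fun t : ℝ => t^2 - 4) (2*t) t := by
    simpa using ((hasDerivAt_pow 2 t).sub_const 4)
  have h2 := h1.sqrt (ne_of_gt hd)
  have h3 := ((hasDerivAt_id t).add h2).div_const 2
  have hfun : (fun t : ℝ => (id t + Real.sqrt (t^2-4))/2) = Qf := by
    funext x; rw [Qf]; rfl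
  replace h3 : HasDerivAt Qf ((1 + 2 * t / (2 * Real.sqrt (t ^ 2 - 4))) / 2) t := by
    rw [← hfun]; exact h3
  convert h3 using 1
  rw [Qf]
  field_simp
  ring

lemma psif_hasDerivAt {β t : ℝ} (hβ0 : 0 < β) (ht : 2 < t) :
    HasDerivAt (psif β) (β * (Qf t ^ β - (Qf t ^ β)⁻¹) / Real.sqrt (t^2-4)) t := by
  have hd := disc_pos ht
  have hs : 0 < Real.sqrt (t^2-4) := Real.sqrt_pos.2 hd
  have hQ := Q_pos ht
  have hx : 0 < Qf t ^ β := Real.rpow_pos_of_pos hQ β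
  have hrp := (Q_hasDerivAt ht).rpow_const (p := β) (Or.inl (ne_of_gt hQ))
  have hinv := hrp.inv (ne_of_gt hx)
  have hsum := hrp.add hinv
  have hfun : (fun y : ℝ => Qf y ^ β + (Qf y ^ β)⁻¹) = psif β := by
    funext x; rw [psif]
  replace hsum : HasDerivAt (psif β) (Qf t / Real.sqrt (t ^ 2 - 4) * β * Qf t ^ (β - 1) + -(Qf t / Real.sqrt (t ^ 2 - 4) * β * Qf t ^ (β - 1)) / (Qf t ^ β) ^ 2) t := by
    rw [← hfun]; exact hsum
  convert hsum using 1
  have hQm : Qf t ^ (β - 1) = Qf t ^ β / Qf t := by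
    rw [Real.rpow_sub hQ, Real.rpow_one]
  rw [hQm]
  field_simp
  ring

lemma psif_gt_two {β t : ℝ} (hβ0 : 0 < β) (ht : 2 < t) : 2 < psif β t := by
  have hQ := Q_gt_one ht
  have hx : 1 < Qf t ^ β :=
    (Real.one_lt_rpow_iff_of_pos (Q_pos ht)).2 (Or.inl ⟨hQ, hβ0⟩)
  exact two_lt_add_inv hx

lemma psif_contDiffOn {β : ℝ} : ContDiffOn ℝ (⊤ : ℕ∞) (psif β) (Set.Ioi (2:ℝ)) := by
  intro x hx
  have hx2 : (2:ℝ) < x := hx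
  have hd := disc_pos hx2
  have hQ := Q_pos hx2
  have c1 : ContDiffAt ℝ (⊤ : ℕ∞) (fun t : ℝ => t^2 - 4) x :=
    ((contDiff_id.pow 2).sub contDiff_const).contDiffAt
  have c2 : ContDiffAt ℝ (⊤ : ℕ∞) (fun t : ℝ => Real.sqrt (t^2-4)) x :=
    (Real.contDiffAt_sqrt (ne_of_gt hd)).comp x c1
  have c3 : ContDiffAt ℝ (⊤ : ℕ∞) Qf x := by
    have := (contDiffAt_id.add c2).div_const 2
    exact this
  have c4 : ContDiffAt ℝ (⊤ : ℕ∞) (fun t => Qf t ^ β) x := c3.rpow_const_of_ne (ne_of_gt hQ)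
  have c5 : ContDiffAt ℝ (⊤ : ℕ∞) (fun t => (Qf t ^ β)⁻¹) x :=
    c4.inv (ne_of_gt (Real.rpow_pos_of_pos hQ β))
  exact (c4.add c5).contDiffWithinAt

lemma psif_eval {β : ℝ} {v : ℝ} (hv : 0 < v) :
    psif β (v + v⁻¹) = v ^ β + (v ^ β)⁻¹ := by
  have hmi : v * v⁻¹ = 1 := mul_inv_cancel₀ (ne_of_gt hv)
  have habs : Real.sqrt ((v+v⁻¹)^2 - 4) = |v - v⁻¹| := by
    rw [show (v+v⁻¹)^2 - 4 = (v - v⁻¹)^2 by linear_combination 4*hmi, Real.sqrt_sq_eq_abs]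
  rcases le_or_gt 1 v with hv1 | hv1
  · have hvi : v⁻¹ ≤ 1 := by
      rw [inv_le_one_iff₀]; right; exact hv1
    have habs2 : |v - v⁻¹| = v - v⁻¹ := abs_of_nonneg (by linarith)
    have hQQ : Qf (v+v⁻¹) = v := by rw [Qf, habs, habs2]; ring
    rw [psif, hQQ]
  · have hvi : 1 < v⁻¹ := one_lt_inv_iff₀.2 ⟨hv, hv1⟩
    have habs2 : |v - v⁻¹| = v⁻¹ - v := by
      rw [abs_of_neg (by linarith)]; ring
    have hQQ : Qf (v+v⁻¹) = v⁻¹ := by rw [Qf, habs, habs2]; ring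
    rw [psif, hQQ, Real.inv_rpow hv.le, inv_inv, add_comm]

lemma Jint_nonneg {β : ℝ} (hβ0 : 0 ≤ β) (n : ℕ) {t : ℝ} (ht : 0 ≤ t) : 0 ≤ Jint β n t :=
  MeasureTheory.setIntegral_nonneg measurableSet_Ioi fun y hy => J_integrand_nonneg hβ0 n ht hy

lemma cms_w {β : ℝ} (hβ0 : 0 < β) (hβ1 : β < 1) {C : ℝ} (hC : 0 ≤ C) :
    CMs (fun t => C * Jint β 0 t) 2 := by
  have h := cms_of_chain (a := 2) (F := fun m t => (C * (-1)^m * (m.factorial:ℝ)) * Jint β m t)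
    (fun m x hx => by
      have hder := (Jint_hasDerivAt hβ0 hβ1 m hx).const_mul (C * (-1)^m * (m.factorial:ℝ))
      refine hder.congr_deriv ?_
      push_cast [Nat.factorial_succ, pow_succ]
      ring)
    (fun m x hx => by
      have hJ : 0 ≤ Jint β m x := Jint_nonneg hβ0.le m (by linarith)
      have e : (-1:ℝ)^m * ((C * (-1)^m * (m.factorial:ℝ)) * Jint β m x)
          = (C * (m.factorial:ℝ) * Jint β m x) * ((-1:ℝ)^m)^2 := by ring
      rw [e]
      exact mul_nonneg (mul_nonneg (mul_nonneg hC (Nat.cast_nonneg _)) hJ) (sq_nonneg _))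
  have hfun : (fun t => (C * (-1:ℝ)^(0:ℕ) * ((Nat.factorial 0):ℝ)) * Jint β 0 t)
      = fun t => C * Jint β 0 t := by
    funext t; norm_num
  rw [← hfun]
  exact h

lemma psif_deriv_w {β : ℝ} (hβ0 : 0 < β) (hβ1 : β < 1) {x : ℝ} (hx : 2 < x) :
    HasDerivAt (psif β) ((β * ((2:ℝ)^β - 1) / Dd β 1 2) * Jint β 0 x) x := by
  have hQ1 := Q_gt_one hx
  have hkey := key_identity hβ0 hβ1 hQ1
  rw [Q_add_inv hx] at hkey
  have hs : 0 < Real.sqrt (x^2-4) := Real.sqrt_pos.2 (disc_pos hx)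
  have hsub := Q_sub_inv hx
  have hD := Dd_pos hβ0 hβ1
  have h2β : (0:ℝ) < 2^β - 1 := by linarith [one_lt_two_rpow hβ0]
  have hqq : 0 < Qf x - (Qf x)⁻¹ := by
    rw [hsub]; exact hs
  have hDne : Dd β 1 2 ≠ 0 := ne_of_gt hD
  have hEne : (2:ℝ)^β - 1 ≠ 0 := ne_of_gt h2β
  have hval : β * (Qf x ^ β - (Qf x ^ β)⁻¹) / Real.sqrt (x^2-4)
      = (β * ((2:ℝ)^β - 1) / Dd β 1 2) * Jint β 0 x := by
    rw [← hsub]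
    have hXX : Qf x ^ β - (Qf x ^ β)⁻¹
        = (Qf x - (Qf x)⁻¹) * Jint β 0 x * (((2:ℝ)^β - 1) / Dd β 1 2) := by
      rw [hkey]
      field_simp
    have hgen : ∀ (S y : ℝ), S ≠ 0 → β * (S * y) / S = β * y := by
      intro S y hS; field_simp
    rw [mul_assoc] at hXX
    rw [hXX, hgen (Qf x - (Qf x)⁻¹) (Jint β 0 x * (((2:ℝ)^β - 1) / Dd β 1 2)) (ne_of_gt hqq)]
    ring
  rw [← hval]
  exact psif_hasDerivAt hβ0 hx

lemma abs_exp_eq {v b : ℝ} (hv : 0 < v) : v^b + (v^b)⁻¹ = v^|b| + (v^|b|)⁻¹ := by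
  rcases abs_cases b with ⟨h,_⟩|⟨h,_⟩
  · rw [h]
  · rw [h, Real.rpow_neg hv.le, inv_inv, add_comm]

lemma main_eq {f : ℝ → ℝ} {u v a b : ℝ} (hu : 0 < u) (hv : 0 < v) {gU : ℝ → ℝ}
    (hgUeq : ∀ w : ℝ, 0 < w → f (u^b * w) * f (u^b / w) = gU (w + w⁻¹)) :
    (u*v)^a * f ((u*v)^b) * ((u/v)^a * f ((u/v)^b)) = u^(2*a) * gU (v^b + (v^b)⁻¹) := by
  have huv : 0 < u*v := mul_pos hu hv
  have huv' : 0 < u/v := div_pos hu hv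
  have h1 : (u*v)^a * (u/v)^a = u^(2*a) := by
    rw [← Real.mul_rpow huv.le huv'.le, show u*v*(u/v) = u^(2:ℕ) by field_simp,
      ← Real.rpow_natCast u 2, ← Real.rpow_mul hu.le]
    norm_num
  have e1 : (u*v)^b = u^b * v^b := Real.mul_rpow hu.le hv.le
  have e2 : (u/v)^b = u^b / v^b := Real.div_rpow hu.le hv.le b
  calc (u*v)^a * f ((u*v)^b) * ((u/v)^a * f ((u/v)^b))
      = ((u*v)^a * (u/v)^a) * (f ((u*v)^b) * f ((u/v)^b)) := by ring
    _ = u^(2*a) * (f (u^b * v^b) * f (u^b / v^b)) := by rw [h1, e1, e2]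
    _ = u^(2*a) * gU (v^b + (v^b)⁻¹) := by
        rw [hgUeq (v^b) (Real.rpow_pos_of_pos hv b)]

end StmtAux

open scoped ContDiff in
theorem stmt_6 (f : ℝ → ℝ) (hf : HCM f) (a b : ℝ) (hb : |b| ≤ 1) (hb0 : b ≠ 0) :
    HCM (fun x : ℝ => x ^ a * f (x ^ b)) := by
  classical
  obtain ⟨hfpos, hfg⟩ := hf
  constructor
  · intro x hx
    exact mul_pos (Real.rpow_pos_of_pos hx a) (hfpos _ (Real.rpow_pos_of_pos hx b))
  intro u hu
  obtain ⟨gU, hgU, hgUeq⟩ := hfg (u^b) (Real.rpow_pos_of_pos hu b)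
  have hβ0 : 0 < |b| := abs_pos.2 hb0
  have hupos : (0:ℝ) ≤ u^(2*a) := (Real.rpow_pos_of_pos hu (2*a)).le
  have hkey : ∀ v : ℝ, 0 < v →
      (u*v)^a * f ((u*v)^b) * ((u/v)^a * f ((u/v)^b))
        = u^(2*a) * gU (v^|b| + (v^|b|)⁻¹) := by
    intro v hv
    rw [StmtAux.main_eq hu hv hgUeq, StmtAux.abs_exp_eq hv]
  rcases lt_or_eq_of_le hb with hβ1 | hβ1
  · -- |b| < 1 : compose with psif
    set β := |b| with hβdef
    set C : ℝ := β * ((2:ℝ)^β - 1) / StmtAux.Dd β 1 2 with hCdef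
    have hD := StmtAux.Dd_pos hβ0 hβ1
    have h2β : (0:ℝ) < 2^β - 1 := by linarith [StmtAux.one_lt_two_rpow hβ0]
    have hC : 0 ≤ C := by positivity
    have hψω : ContDiffOn ℝ (⊤ : ℕ∞) (StmtAux.psif β) (Set.Ioi (2:ℝ)) := StmtAux.psif_contDiffOn
    have hpsiS : ContDiffOn ℝ ∞ (StmtAux.psif β) (Set.Ioi (2:ℝ)) :=
      hψω.of_le le_rfl
    have hmap : ∀ x, (2:ℝ) < x → (2:ℝ) < StmtAux.psif β x :=
      fun x hx => StmtAux.psif_gt_two hβ0 hx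
    have hmapsTo : Set.MapsTo (StmtAux.psif β) (Set.Ioi (2:ℝ)) (Set.Ioi (2:ℝ)) :=
      fun x hx => hmap x hx
    have hw : StmtAux.CMs (fun t => C * StmtAux.Jint β 0 t) 2 := StmtAux.cms_w hβ0 hβ1 hC
    have hd : ∀ x, (2:ℝ) < x → HasDerivAt (StmtAux.psif β) ((fun t => C * StmtAux.Jint β 0 t) x) x :=
      fun x hx => StmtAux.psif_deriv_w hβ0 hβ1 hx
    have hcms : StmtAux.CMs (fun t => gU (StmtAux.psif β t)) 2 :=
      StmtAux.cms_comp hpsiS hmap hw hd (StmtAux.CMs.of_CMOn hgU)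
    refine ⟨fun t => u^(2*a) * gU (StmtAux.psif β t), ⟨?_, ?_⟩, ?_⟩
    · exact contDiffOn_const.mul (hgU.1.comp hψω hmapsTo)
    · intro n x hx
      rw [StmtAux.iteratedDeriv_const_mul_on isOpen_Ioi (u^(2*a)) n _ hcms.1 x hx]
      have h2 := hcms.2 n x hx
      have e : (-1:ℝ)^n * (u^(2*a) * iteratedDeriv n (fun t => gU (StmtAux.psif β t)) x)
          = u^(2*a) * ((-1:ℝ)^n * iteratedDeriv n (fun t => gU (StmtAux.psif β t)) x) := by
        ring
      rw [e]
      exact mul_nonneg hupos h2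
    · intro v hv
      have := hkey v hv
      simp only
      rw [this, StmtAux.psif_eval hv]
  · -- |b| = 1
    refine ⟨fun t => u^(2*a) * gU t, ⟨contDiffOn_const.mul hgU.1, ?_⟩, ?_⟩
    · intro n x hx
      rw [StmtAux.iteratedDeriv_const_mul_on isOpen_Ioi (u^(2*a)) n _
        (hgU.1.of_le le_rfl) x hx]
      have h2 := hgU.2 n x hx
      have e : (-1:ℝ)^n * (u^(2*a) * iteratedDeriv n gU x)
          = u^(2*a) * ((-1:ℝ)^n * iteratedDeriv n gU x) := by ring
      rw [e]
      exact mul_nonneg hupos h2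
    · intro v hv
      have h := hkey v hv
      rw [hβ1, Real.rpow_one] at h
      simp only
      rw [h]
end

section
/- For α ∈ (1/2, 1), the function f_α(x) = 1/(x^{2(1-α)} + 2cos(πα)x^{1-α} + 1) on (0,∞) is not completely monotone; indeed it is strictly increasing on a right neighborhood of 0. -/
open Real

theorem stmt_8 (α : ℝ) (hα : α ∈ Set.Ioo (1/2 : ℝ) 1) :
    ¬ CMOn (fun x : ℝ =>
        (x ^ (2 * (1 - α)) + 2 * Real.cos (π * α) * x ^ (1 - α) + 1)⁻¹) 0 ∧
    ∃ δ > (0:ℝ), StrictMonoOn (fun x : ℝ =>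
        (x ^ (2 * (1 - α)) + 2 * Real.cos (π * α) * x ^ (1 - α) + 1)⁻¹)
      (Set.Ioo 0 δ) := by
  obtain ⟨hα1, hα2⟩ := hα
  have hpi := Real.pi_pos
  set c : ℝ := Real.cos (π * α) with hc
  set β : ℝ := 1 - α with hβ
  have hβ0 : 0 < β := by simp [hβ]; linarith
  have hc0 : c < 0 := by
    apply Real.cos_neg_of_pi_div_two_lt_of_lt
    · nlinarith
    · nlinarith
  have hc1 : -1 < c := by
    have := Real.neg_one_le_cos (π * α)
    rcases eq_or_lt_of_le this with h | h
    · exfalso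
      have : Real.cos (π * α) = Real.cos π := by rw [Real.cos_pi]; exact h.symm
      have h2 : π * α = π := by
        exact Real.injOn_cos ⟨by nlinarith, by nlinarith⟩ ⟨by linarith, le_rfl⟩ this
      nlinarith
    · exact h
  set δ : ℝ := (-c) ^ (1 / β) with hδdef
  have hnc : (0:ℝ) < -c := by linarith
  have hδ0 : 0 < δ := Real.rpow_pos_of_pos hnc _
  have hδβ : δ ^ β = -c := by
    rw [hδdef, ← Real.rpow_mul hnc.le, one_div, inv_mul_cancel₀ hβ0.ne', Real.rpow_one]
  set f : ℝ → ℝ := fun x : ℝ =>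
      (x ^ (2 * (1 - α)) + 2 * Real.cos (π * α) * x ^ (1 - α) + 1)⁻¹ with hf
  -- basic facts about the denominator on (0, δ)
  have hden : ∀ x ∈ Set.Ioo (0:ℝ) δ,
      x ^ (2 * (1 - α)) + 2 * Real.cos (π * α) * x ^ (1 - α) + 1
        = (x ^ β) ^ 2 + 2 * c * (x ^ β) + 1 := by
    intro x hx
    have : x ^ (2 * (1 - α)) = (x ^ β) ^ 2 := by
      rw [show (2:ℝ) * (1 - α) = β * 2 by rw [hβ]; ring, Real.rpow_mul hx.1.le,
        Real.rpow_two]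
    rw [this, ← hβ, ← hc]
  have htlt : ∀ x ∈ Set.Ioo (0:ℝ) δ, x ^ β < -c := by
    intro x hx
    calc x ^ β < δ ^ β := Real.rpow_lt_rpow hx.1.le hx.2 hβ0
    _ = -c := hδβ
  have hpos : ∀ x ∈ Set.Ioo (0:ℝ) δ,
      0 < x ^ (2 * (1 - α)) + 2 * Real.cos (π * α) * x ^ (1 - α) + 1 := by
    intro x hx
    rw [hden x hx]
    have h1 := htlt x hx
    have h2 : 0 < x ^ β := Real.rpow_pos_of_pos hx.1 _
    nlinarith [sq_nonneg (x ^ β + c)]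
  -- strict monotonicity
  have hmono : StrictMonoOn f (Set.Ioo 0 δ) := by
    intro x hx y hy hxy
    have hdx := hden x hx
    have hdy := hden y hy
    have htx := htlt x hx
    have hty := htlt y hy
    have htxy : x ^ β < y ^ β := Real.rpow_lt_rpow hx.1.le hxy hβ0
    have h2 : 0 < x ^ β := Real.rpow_pos_of_pos hx.1 _
    have hlt : y ^ (2 * (1 - α)) + 2 * Real.cos (π * α) * y ^ (1 - α) + 1
        < x ^ (2 * (1 - α)) + 2 * Real.cos (π * α) * x ^ (1 - α) + 1 := by
      rw [hdx, hdy]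
      nlinarith [mul_pos (sub_pos.mpr htxy) (by nlinarith : 0 < -(x ^ β + y ^ β + 2 * c))]
    have hpy := hpos y hy
    simp only [hf]
    exact inv_strictAnti₀ hpy hlt
  constructor
  · rintro ⟨hsmooth, hsign⟩
    have hanti : AntitoneOn f (Set.Ioi 0) := by
      apply antitoneOn_of_deriv_nonpos (convex_Ioi 0) hsmooth.continuousOn
      · rw [interior_Ioi]; exact hsmooth.differentiableOn (by simp)
      · intro x hx
        rw [interior_Ioi] at hx
        have := hsign 1 x hx
        simp only [pow_one, iteratedDeriv_one] at this
        linarith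
    have h1 : (δ/2 : ℝ) ∈ Set.Ioo (0:ℝ) δ := ⟨by linarith, by linarith⟩
    have h2 : (3*δ/4 : ℝ) ∈ Set.Ioo (0:ℝ) δ := ⟨by linarith, by linarith⟩
    have hlt : f (δ/2) < f (3*δ/4) := hmono h1 h2 (by linarith)
    have hle : f (3*δ/4) ≤ f (δ/2) :=
      hanti (by exact h1.1) (by exact h2.1) (by linarith)
    linarith
  · exact ⟨δ, hδ0, hmono⟩
end

section
/- For α ∈ (0,1), the function p_α(x) = sin(πα)/(πα(x² + 2cos(πα)x + 1)) is a probability density on (0,∞): it is positive and ∫₀^∞ p_α(x) dx = 1. -/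
/-!
With `θ = πα ∈ (0, π)`, completing the square gives `x² + 2 cos θ x + 1 = (x + cos θ)² + sin² θ > 0`,
and `arctan ((x + cos θ) / sin θ) / sin θ` is an antiderivative of its
reciprocal. Its value rises from `(π/2 - θ) / sin θ` at `0` (since `cos θ / sin θ = tan (π/2 - θ)`)
to `(π/2) / sin θ` at infinity, so `∫₀^∞ dx / (x² + 2 cos θ x + 1) = θ / sin θ`.
-/

open Real MeasureTheory Filter

namespace Real

variable {θ : ℝ}

lemma sq_add_two_cos_mul_add_one_eq (θ x : ℝ) :
    x ^ 2 + 2 * cos θ * x + 1 = (x + cos θ) ^ 2 + sin θ ^ 2 := by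
  nlinarith [cos_sq_add_sin_sq θ]

lemma sq_add_two_cos_mul_add_one_pos (hθ : sin θ ≠ 0) (x : ℝ) :
    0 < x ^ 2 + 2 * cos θ * x + 1 := by
  rw [sq_add_two_cos_mul_add_one_eq]
  positivity

lemma hasDerivAt_arctan_div_sin (hθ : sin θ ≠ 0) (x : ℝ) :
    HasDerivAt (fun x => arctan ((x + cos θ) / sin θ) / sin θ)
      (x ^ 2 + 2 * cos θ * x + 1)⁻¹ x := by
  have hlin : HasDerivAt (fun x => (x + cos θ) / sin θ) (1 / sin θ) x := by
    simpa using ((hasDerivAt_id x).add_const (cos θ)).div_const (sin θ)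
  refine (((hasDerivAt_arctan _).comp x hlin).div_const (sin θ)).congr_deriv ?_
  rw [sq_add_two_cos_mul_add_one_eq]
  field_simp
  ring

lemma arctan_cos_div_sin (hθ₀ : 0 < θ) (hθπ : θ < π) :
    arctan (cos θ / sin θ) = π / 2 - θ := by
  rw [← sin_pi_div_two_sub θ, ← cos_pi_div_two_sub θ, ← tan_eq_sin_div_cos,
    arctan_tan (by linarith) (by linarith)]

theorem integral_Ioi_inv_sq_add_two_cos_mul_add_one (hθ₀ : 0 < θ) (hθπ : θ < π) :
    ∫ x in Set.Ioi (0 : ℝ), (x ^ 2 + 2 * cos θ * x + 1)⁻¹ = θ / sin θ := by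
  have hsin : 0 < sin θ := sin_pos_of_pos_of_lt_pi hθ₀ hθπ
  have hlim : Tendsto (fun x => arctan ((x + cos θ) / sin θ) / sin θ) atTop
      (nhds (π / 2 / sin θ)) :=
    ((tendsto_arctan_atTop.mono_right nhdsWithin_le_nhds).comp
      ((tendsto_atTop_add_const_right _ _ tendsto_id).atTop_div_const hsin)).div_const _
  rw [integral_Ioi_of_hasDerivAt_of_nonneg'
      (fun x _ => hasDerivAt_arctan_div_sin hsin.ne' x)
      (fun x _ => (inv_pos.mpr (sq_add_two_cos_mul_add_one_pos hsin.ne' x)).le) hlim,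
    zero_add, arctan_cos_div_sin hθ₀ hθπ]
  ring

end Real

theorem stmt_13 (α : ℝ) (hα : α ∈ Set.Ioo (0:ℝ) 1) :
    (∀ x : ℝ, 0 < x →
      0 < Real.sin (π * α) / (π * α * (x ^ 2 + 2 * Real.cos (π * α) * x + 1))) ∧
    ∫ x in Set.Ioi (0:ℝ),
        Real.sin (π * α) / (π * α * (x ^ 2 + 2 * Real.cos (π * α) * x + 1)) = 1 := by
  obtain ⟨hα₀, hα₁⟩ := hα
  have hθ₀ : 0 < π * α := by positivity
  have hθπ : π * α < π := by nlinarith [pi_pos]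
  have hsin : 0 < sin (π * α) := sin_pos_of_pos_of_lt_pi hθ₀ hθπ
  have hquad := sq_add_two_cos_mul_add_one_pos hsin.ne'
  refine ⟨fun x _ => by have := hquad x; positivity, ?_⟩
  have hdensity : ∀ x : ℝ, sin (π * α) / (π * α * (x ^ 2 + 2 * cos (π * α) * x + 1))
      = sin (π * α) / (π * α) * (x ^ 2 + 2 * cos (π * α) * x + 1)⁻¹ := fun x => by
    rw [div_mul_eq_div_div, div_eq_mul_inv]
  simp only [hdensity]
  rw [integral_const_mul, integral_Ioi_inv_sq_add_two_cos_mul_add_one hθ₀ hθπ]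
  field_simp
end

section
/- For s, t > 0, the random variable √(γ_t · γ_s) (square root of the product of independent Gamma(t,1) and Gamma(s,1) random variables) has density x ↦ (4 x^{t+s-1} / (Γ(t)Γ(s))) · K_{t-s}(2x) on (0,∞), where K_ν is the modified Bessel function of the second kind. Equivalently, for every bounded measurable φ, ∫₀^∞∫₀^∞ φ(√(uv)) u^{t-1}e^{-u} v^{s-1}e^{-v}/(Γ(t)Γ(s)) du dv = ∫₀^∞ φ(x) · 4x^{t+s-1} K_{t-s}(2x)/(Γ(t)Γ(s)) dx. -/
/-!
Substitute `u = x e^y`, `v = x e^{-y}` (Jacobian `2x`), which maps the half-plane `x > 0` onto the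
open quadrant with `√(uv) = x` and `u + v = 2x cosh y`. The product of the gamma kernels becomes
`x^{t+s-2} e^{(t-s)y} e^{-2x cosh y}`, and symmetrising in `y` gives
`∫_ℝ e^{(t-s)y} e^{-2x cosh y} dy = 2 K_{t-s}(2x)`.
-/

open Real MeasureTheory

/-- The modified Bessel function of the second kind. -/
noncomputable def besselK (ν x : ℝ) : ℝ :=
  ∫ y in Set.Ioi (0:ℝ), Real.cosh (ν * y) * Real.exp (-x * Real.cosh y)

open Set

lemma sq_div_four_le_cosh (y : ℝ) : y ^ 2 / 4 ≤ cosh y := by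
  have h := quadratic_le_exp_of_nonneg (abs_nonneg y)
  rw [← cosh_abs, cosh_eq]
  nlinarith [exp_pos (-|y|), abs_nonneg y, sq_abs y]

lemma integrable_exp_mul_mul_exp_neg_mul_cosh (a : ℝ) {r : ℝ} (hr : 0 < r) :
    Integrable fun y : ℝ => exp (a * y) * exp (-r * cosh y) := by
  set c := r / 4
  set d := a / (2 * c)
  have hc : 0 < c := by positivity
  -- `a y - r cosh y ≤ a y - c y²`, and completing the square gives a Gaussian bound
  have gaussian : Integrable fun y : ℝ => exp (c * d ^ 2) * exp (-c * (y - d) ^ 2) :=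
    ((integrable_exp_neg_mul_sq hc).comp_sub_right d).const_mul _
  refine gaussian.mono' (by fun_prop) (.of_forall fun y => ?_)
  have hsq : c * d ^ 2 - c * (y - d) ^ 2 = a * y - c * y ^ 2 := by
    simp only [d]; field_simp; ring
  have hcosh : c * y ^ 2 ≤ r * cosh y := by
    have := sq_div_four_le_cosh y; simp only [c]; nlinarith
  rw [norm_of_nonneg (by positivity), ← exp_add, ← exp_add]
  exact exp_le_exp.mpr (by linarith)

lemma integral_exp_mul_mul_exp_neg_mul_cosh (a : ℝ) {r : ℝ} (hr : 0 < r) :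
    ∫ y : ℝ, exp (a * y) * exp (-r * cosh y) = 2 * besselK a r := by
  have hflip : ∫ y : ℝ, exp (-a * y) * exp (-r * cosh y)
      = ∫ y : ℝ, exp (a * y) * exp (-r * cosh y) := by
    simpa using integral_neg_eq_self (fun y : ℝ => exp (a * y) * exp (-r * cosh y)) volume
  have hcosh : ∫ y : ℝ, cosh (a * y) * exp (-r * cosh y)
      = ((∫ y : ℝ, exp (-a * y) * exp (-r * cosh y))
        + ∫ y : ℝ, exp (a * y) * exp (-r * cosh y)) / 2 := by
    rw [← integral_add (integrable_exp_mul_mul_exp_neg_mul_cosh (-a) hr)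
      (integrable_exp_mul_mul_exp_neg_mul_cosh a hr), ← integral_div]
    congr 1 with y
    rw [cosh_eq]; ring_nf
  calc ∫ y : ℝ, exp (a * y) * exp (-r * cosh y)
      = ∫ y : ℝ, cosh (a * y) * exp (-r * cosh y) := by rw [hcosh, hflip]; ring
    _ = ∫ y : ℝ, cosh (a * |y|) * exp (-r * cosh |y|) := by
        congr 1 with y
        rw [cosh_abs, ← cosh_abs (a * |y|), abs_mul, abs_abs, ← abs_mul, cosh_abs]
    _ = 2 * besselK a r := integral_comp_abs (f := fun y => cosh (a * y) * exp (-r * cosh y))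

noncomputable def hyperbolicCoords (p : ℝ × ℝ) : ℝ × ℝ := (p.1 * exp p.2, p.1 * exp (-p.2))

noncomputable def hyperbolicCoordsDeriv (p : ℝ × ℝ) : ℝ × ℝ →L[ℝ] ℝ × ℝ :=
  LinearMap.toContinuousLinearMap <|
    Matrix.toLin (Module.Basis.finTwoProd ℝ) (Module.Basis.finTwoProd ℝ)
      !![exp p.2, p.1 * exp p.2; exp (-p.2), -(p.1 * exp (-p.2))]

lemma hasFDerivAt_hyperbolicCoords (p : ℝ × ℝ) :
    HasFDerivAt hyperbolicCoords (hyperbolicCoordsDeriv p) p := by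
  rw [hyperbolicCoordsDeriv, Matrix.toLin_finTwoProd_toContinuousLinearMap]
  have hexp_neg : HasDerivAt (fun y : ℝ => exp (-y)) (-exp (-p.2)) p.2 := by
    simpa using (hasDerivAt_neg p.2).exp
  refine (HasFDerivAt.prodMk (𝕜 := ℝ)
    (hasFDerivAt_fst.mul ((hasDerivAt_exp p.2).comp_hasFDerivAt p hasFDerivAt_snd))
    (hasFDerivAt_fst.mul (hexp_neg.comp_hasFDerivAt p hasFDerivAt_snd))).congr_fderiv ?_
  ext <;> simp

lemma det_hyperbolicCoordsDeriv (p : ℝ × ℝ) : (hyperbolicCoordsDeriv p).det = -(2 * p.1) := by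
  simp only [hyperbolicCoordsDeriv, LinearMap.det_toContinuousLinearMap, LinearMap.det_toLin,
    Matrix.det_fin_two_of]
  have h : exp p.2 * exp (-p.2) = 1 := by rw [← exp_add, add_neg_cancel, exp_zero]
  linear_combination (-(2 * p.1)) * h

lemma sqrt_mul_hyperbolicCoords {x : ℝ} (hx : 0 ≤ x) (y : ℝ) :
    √(x * exp y * (x * exp (-y))) = x := by
  rw [show x * exp y * (x * exp (-y)) = x ^ 2 * (exp y * exp (-y)) by ring, ← exp_add,
    add_neg_cancel, exp_zero, mul_one, sqrt_sq hx]

lemma injOn_hyperbolicCoords : InjOn hyperbolicCoords (Ioi 0 ×ˢ univ) := by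
  rintro ⟨x₁, y₁⟩ ⟨hx₁ : 0 < x₁, -⟩ ⟨x₂, y₂⟩ ⟨hx₂ : 0 < x₂, -⟩ h
  simp only [hyperbolicCoords, Prod.mk.injEq] at h
  have hx : x₁ = x₂ := by
    rw [← sqrt_mul_hyperbolicCoords hx₁.le y₁, ← sqrt_mul_hyperbolicCoords hx₂.le y₂, h.1, h.2]
  subst hx
  rw [exp_injective (mul_left_cancel₀ hx₁.ne' h.1)]

lemma image_hyperbolicCoords : hyperbolicCoords '' (Ioi 0 ×ˢ univ) = Ioi 0 ×ˢ Ioi 0 := by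
  refine Subset.antisymm ?_ ?_
  · rintro _ ⟨⟨x, y⟩, ⟨hx, -⟩, rfl⟩
    exact ⟨mul_pos hx (exp_pos _), mul_pos hx (exp_pos _)⟩
  · rintro ⟨u, v⟩ ⟨hu : 0 < u, hv : 0 < v⟩
    have hx : 0 < √(u * v) := sqrt_pos.mpr (mul_pos hu hv)
    refine ⟨(√(u * v), log (u / √(u * v))), ⟨hx, trivial⟩, ?_⟩
    simp only [hyperbolicCoords, exp_neg, exp_log (div_pos hu hx), Prod.mk.injEq]
    constructor
    · field_simp
    · field_simp; rw [sq_sqrt (mul_pos hu hv).le]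

theorem integral_Ioi_Ioi_eq_integral_hyperbolicCoords {E : Type*} [NormedAddCommGroup E]
    [NormedSpace ℝ E] (f : ℝ → ℝ → E) (hf : IntegrableOn (Function.uncurry f) (Ioi 0 ×ˢ Ioi 0)) :
    ∫ u in Ioi 0, ∫ v in Ioi 0, f u v
      = ∫ x in Ioi 0, ∫ y, (2 * x) • f (x * exp y) (x * exp (-y)) := by
  have hs : MeasurableSet (Ioi (0 : ℝ) ×ˢ (univ : Set ℝ)) := measurableSet_Ioi.prod .univ
  have hderiv : ∀ p ∈ Ioi (0 : ℝ) ×ˢ (univ : Set ℝ),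
      HasFDerivWithinAt hyperbolicCoords (hyperbolicCoordsDeriv p) (Ioi 0 ×ˢ univ) p :=
    fun p _ => (hasFDerivAt_hyperbolicCoords p).hasFDerivWithinAt
  have hf' : IntegrableOn (fun p => |(hyperbolicCoordsDeriv p).det| • Function.uncurry f
      (hyperbolicCoords p)) (Ioi 0 ×ˢ univ) := by
    rw [← integrableOn_image_iff_integrableOn_abs_det_fderiv_smul volume hs hderiv
      injOn_hyperbolicCoords, image_hyperbolicCoords]
    exact hf
  rw [Measure.volume_eq_prod] at hf hf'
  calc ∫ u in Ioi 0, ∫ v in Ioi 0, f u v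
      = ∫ p in Ioi 0 ×ˢ Ioi 0, Function.uncurry f p := by
        rw [Measure.volume_eq_prod, setIntegral_prod _ hf]; rfl
    _ = ∫ p in Ioi 0 ×ˢ univ, |(hyperbolicCoordsDeriv p).det| •
          Function.uncurry f (hyperbolicCoords p) := by
        rw [← image_hyperbolicCoords,
          integral_image_eq_integral_abs_det_fderiv_smul volume hs hderiv injOn_hyperbolicCoords]
    _ = ∫ x in Ioi 0, ∫ y, (2 * x) • f (x * exp y) (x * exp (-y)) := by
        rw [Measure.volume_eq_prod, setIntegral_prod _ hf']
        refine setIntegral_congr_fun measurableSet_Ioi fun x (hx : 0 < x) => ?_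
        simp [det_hyperbolicCoordsDeriv, abs_of_pos hx, hyperbolicCoords]

lemma integrableOn_rpow_mul_exp_neg_prod {t s : ℝ} (ht : 0 < t) (hs : 0 < s) :
    IntegrableOn (fun p : ℝ × ℝ => p.1 ^ (t - 1) * exp (-p.1) * p.2 ^ (s - 1) * exp (-p.2))
      (Ioi 0 ×ˢ Ioi 0) := by
  have hΓ : ∀ {a : ℝ}, 0 < a → IntegrableOn (fun u : ℝ => u ^ (a - 1) * exp (-u)) (Ioi 0) :=
    fun ha => (GammaIntegral_convergent ha).congr_fun (fun _ _ => mul_comm _ _) measurableSet_Ioi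
  have h := (hΓ ht).mul_prod (hΓ hs)
  rw [Measure.prod_restrict, ← Measure.volume_eq_prod] at h
  simpa only [IntegrableOn, mul_assoc] using h

lemma rpow_mul_exp_neg_hyperbolicCoords {x : ℝ} (hx : 0 < x) (t s y : ℝ) :
    (x * exp y) ^ (t - 1) * exp (-(x * exp y)) * (x * exp (-y)) ^ (s - 1) * exp (-(x * exp (-y)))
      = x ^ (t + s - 2) * (exp ((t - s) * y) * exp (-(2 * x) * cosh y)) := by
  rw [mul_rpow hx.le (exp_pos _).le, mul_rpow hx.le (exp_pos _).le, ← exp_mul, ← exp_mul,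
    show t + s - 2 = (t - 1) + (s - 1) by ring, rpow_add hx, ← exp_add]
  calc _ = x ^ (t - 1) * x ^ (s - 1) *
        exp (y * (t - 1) + -(x * exp y) + -y * (s - 1) + -(x * exp (-y))) := by
        simp only [exp_add]; ring
    _ = _ := by rw [cosh_eq]; ring_nf

theorem stmt_16 (t s : ℝ) (ht : 0 < t) (hs : 0 < s)
    (φ : ℝ → ℝ) (hφm : Measurable φ) (hφb : ∃ C : ℝ, ∀ x : ℝ, |φ x| ≤ C) :
    ∫ u in Set.Ioi (0:ℝ), ∫ v in Set.Ioi (0:ℝ),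
        φ (Real.sqrt (u * v))
          * (u ^ (t - 1) * Real.exp (-u) * v ^ (s - 1) * Real.exp (-v)
              / (Real.Gamma t * Real.Gamma s))
      = ∫ x in Set.Ioi (0:ℝ),
          φ x * (4 * x ^ (t + s - 1) * besselK (t - s) (2 * x)
              / (Real.Gamma t * Real.Gamma s)) := by
  obtain ⟨C, hC⟩ := hφb
  have hint : IntegrableOn (Function.uncurry fun u v => φ √(u * v) *
      (u ^ (t - 1) * exp (-u) * v ^ (s - 1) * exp (-v) / (Gamma t * Gamma s))) (Ioi 0 ×ˢ Ioi 0) :=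
    ((integrableOn_rpow_mul_exp_neg_prod ht hs).div_const _).bdd_mul (c := C)
      (hφm.comp (by fun_prop)).aestronglyMeasurable (.of_forall fun p => hC _)
  rw [integral_Ioi_Ioi_eq_integral_hyperbolicCoords _ hint]
  refine setIntegral_congr_fun measurableSet_Ioi fun x (hx : 0 < x) => ?_
  calc ∫ y, (2 * x) • (φ √(x * exp y * (x * exp (-y))) * ((x * exp y) ^ (t - 1) *
          exp (-(x * exp y)) * (x * exp (-y)) ^ (s - 1) * exp (-(x * exp (-y))) /
          (Gamma t * Gamma s)))
      = ∫ y, 2 * x * φ x * x ^ (t + s - 2) / (Gamma t * Gamma s) *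
          (exp ((t - s) * y) * exp (-(2 * x) * cosh y)) := by
        congr 1 with y
        rw [smul_eq_mul, sqrt_mul_hyperbolicCoords hx.le, rpow_mul_exp_neg_hyperbolicCoords hx]
        ring
    _ = φ x * (4 * x ^ (t + s - 1) * besselK (t - s) (2 * x) / (Gamma t * Gamma s)) := by
        rw [integral_const_mul, integral_exp_mul_mul_exp_neg_mul_cosh _ (by positivity),
          show t + s - 1 = t + s - 2 + 1 by ring, rpow_add_one hx.ne']
        ring
end
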